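/- arXiv:2308.04894 — 3 statements merged into one kernel-verified Lean document; each statement's English description precedes it below -/
import Mathlib

section
/- Let N ≥ 2 and let A_1,…,A_N ∈ GL_d(ℝ) all be contracting with respect to some norm on ℝ^d, and suppose each A_i is a similarity with respect to some fixed inner product on ℝ^d. Let Q be a d×d real matrix with dimaff(A_1,…,A_N) ≤ rank Q. Then inf{s > 0 : ∑_{n=1}^∞ ∑_{|𝚒|=n} φ^s(Q A_𝚒) < ∞} = dimaff(A_1,…,A_N). -/
open scoped BigOperators Kronecker

noncomputable section

namespace PaperProj

open Matrix

/-- The `j`-th singular value (`1`-indexed, in decreasing order) of a real square matrix: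
the non-negative square roots of the eigenvalues of `AᵀA`, listed in decreasing order
with multiplicity. -/
noncomputable def sval {ι : Type*} [Fintype ι] [DecidableEq ι] (A : Matrix ι ι ℝ) (j : ℕ) : ℝ :=
  ((((Finset.univ.val.map fun i : ι =>
      Real.sqrt ((show (Aᵀ * A).IsHermitian by
        simpa [Matrix.conjTranspose_eq_transpose_of_trivial] using
          Matrix.isHermitian_conjTranspose_mul_self A).eigenvalues i)).sort
    (· ≤ ·)).reverse).getD (j - 1) 0)

/-- Falconer's singular value function `φ^s`. -/
noncomputable def svf {ι : Type*} [Fintype ι] [DecidableEq ι] (s : ℝ) (A : Matrix ι ι ℝ) : ℝ :=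
  if s ≤ (Fintype.card ι : ℝ) then
    (∏ j ∈ Finset.Icc 1 ⌊s⌋₊, sval A j) * sval A ⌈s⌉₊ ^ (s - (⌊s⌋₊ : ℝ))
  else |A.det| ^ (s / (Fintype.card ι : ℝ))

/-- The product `A_{i_1} ⋯ A_{i_n}` associated to a word `i = i_1 ⋯ i_n`. -/
noncomputable def wordProd {ι : Type*} [Fintype ι] [DecidableEq ι] {N : ℕ}
    (A : Fin N → Matrix ι ι ℝ) {n : ℕ} (i : Fin n → Fin N) : Matrix ι ι ℝ :=
  (List.ofFn fun j => A (i j)).prod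

/-- The affinity dimension: `inf {s > 0 : ∑_{n≥1} ∑_{|i|=n} φ^s(A_i) < ∞}`. -/
noncomputable def affDim {ι : Type*} [Fintype ι] [DecidableEq ι] {N : ℕ}
    (A : Fin N → Matrix ι ι ℝ) : ℝ :=
  sInf {s : ℝ | 0 < s ∧
    Summable fun n : ℕ => ∑ i : Fin (n + 1) → Fin N, svf s (wordProd A i)}

/-- The pressure `P(A_1,…,A_N; s) = lim_n (1/n) log ∑_{|i|=n} φ^s(A_i)` (the limit exists by
subadditivity, so it equals the limsup used here). -/
noncomputable def pressure {ι : Type*} [Fintype ι] [DecidableEq ι] {N : ℕ}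
    (A : Fin N → Matrix ι ι ℝ) (s : ℝ) : ℝ :=
  Filter.limsup
    (fun n : ℕ => Real.log (∑ i : Fin n → Fin N, svf s (wordProd A i)) / n) Filter.atTop

/-- The tuple `(A_1,…,A_N)` is contracting with respect to some norm on `ℝ^d`. -/
def IsContractingTuple {ι : Type*} [Fintype ι] [DecidableEq ι] {N : ℕ}
    (A : Fin N → Matrix ι ι ℝ) : Prop :=
  ∃ (ν : Seminorm ℝ (ι → ℝ)) (c : ℝ), (∀ x : ι → ℝ, x ≠ 0 → 0 < ν x) ∧ c < 1 ∧
    ∀ (i : Fin N) (x : ι → ℝ), ν ((A i).mulVec x) ≤ c * ν x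

/-- Irreducibility: no nonzero proper subspace is preserved by every map of the tuple. -/
def IrreducibleTuple {N : ℕ} {V : Type*} [AddCommGroup V] [Module ℝ V]
    (f : Fin N → V →ₗ[ℝ] V) : Prop :=
  ∀ W : Submodule ℝ V, (∀ i, W.map (f i) ≤ W) → W = ⊥ ∨ W = ⊤

/-- Strong irreducibility: no finite union of nonzero proper subspaces is preserved by
every map of the tuple. -/
def StronglyIrreducibleTuple {N : ℕ} {V : Type*} [AddCommGroup V] [Module ℝ V]
    (f : Fin N → V →ₗ[ℝ] V) : Prop :=
  ∀ (m : ℕ) (W : Fin (m + 1) → Submodule ℝ V), (∀ j, W j ≠ ⊥) → (∀ j, W j ≠ ⊤) →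
    ¬ (∀ i, (f i) '' (⋃ j, (W j : Set V)) = ⋃ j, (W j : Set V))

/-- The linear map induced on the `k`-th exterior power by a linear endomorphism. -/
noncomputable def extPowMap {V : Type*} [AddCommGroup V] [Module ℝ V] (k : ℕ)
    (f : V →ₗ[ℝ] V) : ⋀[ℝ]^k V →ₗ[ℝ] ⋀[ℝ]^k V :=
  (ExteriorAlgebra.map f).toLinearMap.restrict (p := ⋀[ℝ]^k V) (q := ⋀[ℝ]^k V)
    (by
      intro x hx
      have h : Submodule.map (ExteriorAlgebra.map f).toLinearMap (⋀[ℝ]^k V) ≤ ⋀[ℝ]^k V := by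
        conv_lhs => rw [← ExteriorAlgebra.ιMulti_span_fixedDegree]
        rw [Submodule.map_span, Submodule.span_le]
        rintro y ⟨z, ⟨m, rfl⟩, rfl⟩
        rw [AlgHom.toLinearMap_apply, ExteriorAlgebra.map_apply_ιMulti]
        rw [← ExteriorAlgebra.ιMulti_span_fixedDegree]
        exact Submodule.subset_span ⟨_, rfl⟩
      exact h ⟨x, hx, rfl⟩)

instance extPowFree {V : Type*} [AddCommGroup V] [Module ℝ V] (k : ℕ) :
    Module.Free ℝ (⋀[ℝ]^k V) := Module.Free.of_divisionRing ℝ _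

instance extPowFinite {V : Type*} [AddCommGroup V] [Module ℝ V] [Module.Finite ℝ V] (k : ℕ) :
    Module.Finite ℝ (⋀[ℝ]^k V) := by
  rw [Module.Finite.iff_fg]
  refine Submodule.FG.pow ?_ k
  rw [← Submodule.map_top (ExteriorAlgebra.ι ℝ (M := V))]
  exact Submodule.FG.map _ Module.Finite.fg_top

/-- The tuple `(A_1,…,A_N)` is `k`-irreducible: the induced tuple on the `k`-th exterior
power is irreducible. -/
def kIrreducible {ι : Type*} [Fintype ι] [DecidableEq ι] {N : ℕ} (k : ℕ)
    (A : Fin N → Matrix ι ι ℝ) : Prop :=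
  IrreducibleTuple fun i => extPowMap k (Matrix.toLin' (A i))

/-- A linear endomorphism of a finite-dimensional real vector space is proximal if it has a
simple eigenvalue whose modulus strictly exceeds the modulus of every other (complex)
eigenvalue. -/
def ProximalEnd {V : Type*} [AddCommGroup V] [Module ℝ V] [Module.Finite ℝ V]
    [Module.Free ℝ V] (f : V →ₗ[ℝ] V) : Prop :=
  ∃ lam : ℂ, ((LinearMap.charpoly f).map (algebraMap ℝ ℂ)).roots.count lam = 1 ∧
    ∀ mu ∈ ((LinearMap.charpoly f).map (algebraMap ℝ ℂ)).roots, mu ≠ lam →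
      ‖mu‖ < ‖lam‖

/-- The tuple `(A_1,…,A_N)` is proximal of all orders: for each `k = 1,…,d`, some word
product of the induced tuple on the `k`-th exterior power is a proximal linear map. -/
def ProximalAllOrders {ι : Type*} [Fintype ι] [DecidableEq ι] {N : ℕ}
    (A : Fin N → Matrix ι ι ℝ) : Prop :=
  ∀ k : ℕ, 1 ≤ k → k ≤ Fintype.card ι →
    ∃ (n : ℕ) (i : Fin (n + 1) → Fin N),
      ProximalEnd (extPowMap k (Matrix.toLin' (wordProd A i)))

/-- The least number of open `δ`-balls needed to cover `Y` (when `Y` admits a finite cover;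
junk value `0` otherwise). -/
noncomputable def coverNum {E : Type*} [PseudoMetricSpace E] (Y : Set E) (δ : ℝ) : ℕ :=
  sInf {n : ℕ | ∃ t : Finset E, t.card = n ∧ Y ⊆ ⋃ x ∈ t, Metric.ball x δ}

/-- The upper box dimension `limsup_{δ→0⁺} log N(Y,δ) / log (1/δ)`. -/
noncomputable def upperBoxDim {E : Type*} [PseudoMetricSpace E] (Y : Set E) : ℝ :=
  Filter.limsup (fun δ : ℝ => Real.log (coverNum Y δ) / Real.log (1 / δ))
    (nhdsWithin 0 (Set.Ioi 0))

/-- The operator norm of a matrix with respect to the Euclidean norm. -/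
noncomputable def opNorm {ι : Type*} [Fintype ι] [DecidableEq ι] (A : Matrix ι ι ℝ) : ℝ :=
  ‖(Matrix.toEuclideanCLM (𝕜 := ℝ) A : EuclideanSpace ℝ ι →L[ℝ] EuclideanSpace ℝ ι)‖


end PaperProj

/-! Write `G = PᵀP`. Then `P A_i P⁻¹` is `r_i` times an orthogonal matrix, so every product
`A_𝚒` stretches each vector by `r_𝚒 = ∏ r_{i_j}` up to a factor `K` independent of `𝚒`. For
`s ≤ d` this gives `φ^s(A_𝚒) ≍ r_𝚒^s` and `φ^s(Q A_𝚒) ≤ (‖Q‖ K r_𝚒)^s`; conversely the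
Courant–Fischer min-max principle gives `σ_j(Q A_𝚒) ≥ σ_j(Q) r_𝚒 / K`, so
`φ^s(Q A_𝚒) ≥ φ^s(Q) (r_𝚒 / K)^s`, where `φ^s(Q) > 0` as long as `s ≤ rank Q`. For `s > d`,
`φ^s(Q A_𝚒) = |det Q|^{s/d} φ^s(A_𝚒)`. So convergence of `∑ φ^s(A_𝚒)` implies that of
`∑ φ^s(Q A_𝚒)`, the converse holds for `s ≤ rank Q`, and exponents above `rank Q` exceed `dimaff`
by hypothesis. The contraction hypothesis forces `r_i < 1`, which makes both sets of exponents
nonempty. -/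

open Module
open scoped InnerProductSpace RealInnerProductSpace

lemma OrthonormalBasis.finrank_span_image {𝕜 E ι : Type*} [RCLike 𝕜] [NormedAddCommGroup E]
    [InnerProductSpace 𝕜 E] [Fintype ι] (b : OrthonormalBasis ι 𝕜 E) (S : Finset ι) :
    finrank 𝕜 (Submodule.span 𝕜 (b '' S)) = S.card := by
  have hli : LinearIndependent 𝕜 (fun i : (S : Set ι) => b i) :=
    b.orthonormal.linearIndependent.comp _ Subtype.val_injective
  rw [Set.image_eq_range, finrank_span_eq_card hli]
  simp

lemma Seminorm.exists_pos_mul_norm_le {E : Type*} [NormedAddCommGroup E] [NormedSpace ℝ E]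
    [FiniteDimensional ℝ E] (p : Seminorm ℝ E) (hp : ∀ x, x ≠ 0 → 0 < p x) :
    ∃ m > 0, ∀ x, m * ‖x‖ ≤ p x := by
  rcases subsingleton_or_nontrivial E with hE | hE
  · exact ⟨1, one_pos, fun x => by simp [Subsingleton.elim x 0]⟩
  have hcont : Continuous p := by
    simpa [continuousOn_univ] using p.convexOn.continuousOn_interior
  obtain ⟨x₀, hx₀, hmin⟩ := (isCompact_sphere (0 : E) 1).exists_isMinOn
    (NormedSpace.sphere_nonempty.mpr zero_le_one) hcont.continuousOn
  refine ⟨p x₀, hp x₀ (ne_zero_of_mem_unit_sphere ⟨x₀, hx₀⟩), fun x => ?_⟩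
  rcases eq_or_ne x 0 with rfl | hx
  · simp
  have hx' : 0 < ‖x‖ := norm_pos_iff.mpr hx
  have hu : ‖x‖⁻¹ • x ∈ Metric.sphere (0 : E) 1 := by
    simp [norm_smul, hx'.ne']
  calc p x₀ * ‖x‖ ≤ p (‖x‖⁻¹ • x) * ‖x‖ := mul_le_mul_of_nonneg_right (hmin hu) hx'.le
    _ = p x := by
      rw [map_smul_eq_mul, norm_inv, norm_norm]
      field_simp

lemma csInf_eq_csInf_of_subset_of_forall_mem {α : Type*} [ConditionallyCompleteLinearOrder α]
    {S T : Set α} {R : α} (hS : S.Nonempty) (hT : BddBelow T) (hST : S ⊆ T)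
    (hTS : ∀ t ∈ T, t ≤ R → t ∈ S) (hR : sInf S ≤ R) : sInf T = sInf S := by
  refine le_antisymm (csInf_le_csInf hT hS hST) (le_csInf (hS.mono hST) fun t ht => ?_)
  rcases le_or_gt t R with htR | htR
  · exact csInf_le (hT.mono hST) (hTS t ht htR)
  · exact hR.trans htR.le

lemma summable_sum_of_le_mul {κ : ℕ → Type*} [∀ n, Fintype (κ n)] {f g : ∀ n, κ n → ℝ}
    {C : ℝ} (hf : ∀ n i, 0 ≤ f n i) (h : ∀ n i, f n i ≤ C * g n i)
    (hg : Summable fun n => ∑ i, g n i) : Summable fun n => ∑ i, f n i :=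
  Summable.of_nonneg_of_le (fun n => Finset.sum_nonneg fun i _ => hf n i)
    (fun n => by rw [Finset.mul_sum]; exact Finset.sum_le_sum fun i _ => h n i) (hg.mul_left C)

namespace LinearMap

variable {𝕜 E F : Type*} [RCLike 𝕜]
  [NormedAddCommGroup E] [InnerProductSpace 𝕜 E] [FiniteDimensional 𝕜 E]
  [NormedAddCommGroup F] [InnerProductSpace 𝕜 F] [FiniteDimensional 𝕜 F]
  (T : E →ₗ[𝕜] F)

noncomputable def rightSingularBasis : OrthonormalBasis (Fin (finrank 𝕜 E)) 𝕜 E :=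
  T.isSymmetric_adjoint_comp_self.eigenvectorBasis rfl

lemma rightSingularBasis_repr_adjoint_comp_self (x : E) (i : Fin (finrank 𝕜 E)) :
    T.rightSingularBasis.repr ((adjoint T ∘ₗ T) x) i =
      (T.singularValues i ^ 2 : ℝ) * T.rightSingularBasis.repr x i := by
  rw [T.sq_singularValues_fin rfl]
  exact T.isSymmetric_adjoint_comp_self.eigenvectorBasis_apply_self_apply rfl x i

lemma norm_apply_sq_eq_sum (x : E) :
    ‖T x‖ ^ 2 = ∑ i : Fin (finrank 𝕜 E),
      T.singularValues i ^ 2 * ‖⟪T.rightSingularBasis i, x⟫_𝕜‖ ^ 2 := by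
  set b := T.rightSingularBasis
  have h : ⟪x, (adjoint T ∘ₗ T) x⟫_𝕜 =
      ∑ i : Fin (finrank 𝕜 E), (T.singularValues i ^ 2 : 𝕜) * (‖⟪b i, x⟫_𝕜‖ ^ 2 : ℝ) := by
    rw [← b.sum_inner_mul_inner]
    refine Finset.sum_congr rfl fun i _ => ?_
    rw [← b.repr_apply_apply, T.rightSingularBasis_repr_adjoint_comp_self, b.repr_apply_apply,
      ← inner_conj_symm (b i) x, RCLike.norm_conj]
    simp only [RCLike.ofReal_pow, ← RCLike.mul_conj]
    ring
  rw [← RCLike.ofReal_inj (K := 𝕜), RCLike.ofReal_pow, ← inner_self_eq_norm_sq_to_K,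
    ← adjoint_inner_right, ← comp_apply, h]
  push_cast
  rfl

lemma inner_rightSingularBasis_eq_zero_of_mem_span {S : Set (Fin (finrank 𝕜 E))} {x : E}
    (hx : x ∈ Submodule.span 𝕜 (T.rightSingularBasis '' S)) {i : Fin (finrank 𝕜 E)}
    (hi : i ∉ S) : ⟪T.rightSingularBasis i, x⟫_𝕜 = 0 := by
  obtain ⟨l, hl, rfl⟩ := Finsupp.mem_span_image_iff_linearCombination 𝕜 |>.mp hx
  rw [← inner_conj_symm, T.rightSingularBasis.orthonormal.inner_finsupp_eq_zero hi hl, map_zero]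

lemma norm_apply_le_of_mem_span {S : Set (Fin (finrank 𝕜 E))} {t : ℝ} (ht : 0 ≤ t)
    (hS : ∀ i ∈ S, T.singularValues i ≤ t) {x : E}
    (hx : x ∈ Submodule.span 𝕜 (T.rightSingularBasis '' S)) : ‖T x‖ ≤ t * ‖x‖ := by
  refine (pow_le_pow_iff_left₀ (norm_nonneg _) (by positivity) two_ne_zero).mp ?_
  rw [norm_apply_sq_eq_sum, mul_pow, ← T.rightSingularBasis.sum_sq_norm_inner_right,
    Finset.mul_sum]
  refine Finset.sum_le_sum fun i _ => ?_
  by_cases hi : i ∈ S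
  · exact mul_le_mul_of_nonneg_right (pow_le_pow_left₀ (T.singularValues_nonneg i) (hS i hi) 2)
      (by positivity)
  · simp [T.inner_rightSingularBasis_eq_zero_of_mem_span hx hi]

lemma le_norm_apply_of_mem_span {S : Set (Fin (finrank 𝕜 E))} {t : ℝ} (ht : 0 ≤ t)
    (hS : ∀ i ∈ S, t ≤ T.singularValues i) {x : E}
    (hx : x ∈ Submodule.span 𝕜 (T.rightSingularBasis '' S)) : t * ‖x‖ ≤ ‖T x‖ := by
  refine (pow_le_pow_iff_left₀ (by positivity) (norm_nonneg _) two_ne_zero).mp ?_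
  rw [norm_apply_sq_eq_sum, mul_pow, ← T.rightSingularBasis.sum_sq_norm_inner_right,
    Finset.mul_sum]
  refine Finset.sum_le_sum fun i _ => ?_
  by_cases hi : i ∈ S
  · exact mul_le_mul_of_nonneg_right (pow_le_pow_left₀ ht (hS i hi) 2) (by positivity)
  · simp [T.inner_rightSingularBasis_eq_zero_of_mem_span hx hi]

lemma norm_apply_rightSingularBasis (i : Fin (finrank 𝕜 E)) :
    ‖T (T.rightSingularBasis i)‖ = T.singularValues i := by
  have hb : T.rightSingularBasis i ∈ Submodule.span 𝕜 (T.rightSingularBasis '' {i}) :=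
    Submodule.subset_span ⟨i, rfl, rfl⟩
  have h₁ := T.norm_apply_le_of_mem_span (T.singularValues_nonneg i) (by simp) hb
  have h₂ := T.le_norm_apply_of_mem_span (T.singularValues_nonneg i) (by simp) hb
  rw [T.rightSingularBasis.orthonormal.1 i, mul_one] at h₁ h₂
  exact le_antisymm h₁ h₂

lemma singularValues_le_of_norm_apply_le {C : ℝ} (hC : 0 ≤ C) (h : ∀ x, ‖T x‖ ≤ C * ‖x‖)
    (k : ℕ) : T.singularValues k ≤ C := by
  rcases lt_or_ge k (finrank 𝕜 E) with hk | hk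
  · simpa [← T.norm_apply_rightSingularBasis ⟨k, hk⟩, T.rightSingularBasis.orthonormal.1]
      using h (T.rightSingularBasis ⟨k, hk⟩)
  · rwa [T.singularValues_of_finrank_le hk]

lemma le_singularValues_of_le_norm_apply {m : ℝ} (h : ∀ x, m * ‖x‖ ≤ ‖T x‖) {k : ℕ}
    (hk : k < finrank 𝕜 E) : m ≤ T.singularValues k := by
  simpa [← T.norm_apply_rightSingularBasis ⟨k, hk⟩, T.rightSingularBasis.orthonormal.1]
    using h (T.rightSingularBasis ⟨k, hk⟩)

lemma singularValues_mul_le_singularValues_comp (W : E →ₗ[𝕜] E) {m : ℝ}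
    (hW : ∀ x, m * ‖x‖ ≤ ‖W x‖) (k : ℕ) :
    T.singularValues k * m ≤ (T ∘ₗ W).singularValues k := by
  rcases le_or_gt m 0 with hm | hm
  · exact (mul_nonpos_of_nonneg_of_nonpos (T.singularValues_nonneg k) hm).trans
      ((T ∘ₗ W).singularValues_nonneg k)
  rcases le_or_gt (finrank 𝕜 E) k with hk | hk
  · simp [T.singularValues_of_finrank_le hk, singularValues_nonneg]
  set n := finrank 𝕜 E
  set k' : Fin n := ⟨k, hk⟩
  have hinj : Function.Injective W := by
    refine (injective_iff_map_eq_zero W).mpr fun x hx => norm_le_zero_iff.mp ?_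
    have := hW x
    rw [hx, norm_zero] at this
    nlinarith [norm_nonneg x]
  let e := LinearEquiv.ofInjectiveEndo W hinj
  -- Min-max: `U` (the top `k + 1` singular directions of `T`, pulled back by `W`) and `V` (the
  -- bottom `n - k` singular directions of `T ∘ W`) have dimensions adding up to `n + 1`.
  let U := (Submodule.span 𝕜 (T.rightSingularBasis '' ↑(Finset.Iic k'))).comap W
  let V := Submodule.span 𝕜 ((T ∘ₗ W).rightSingularBasis '' ↑(Finset.Ici k'))
  have hU : finrank 𝕜 U = k + 1 := by
    have : U = (Submodule.span 𝕜 (T.rightSingularBasis '' ↑(Finset.Iic k'))).map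
        e.symm.toLinearMap := Submodule.comap_equiv_eq_map_symm e _
    rw [this, LinearEquiv.finrank_map_eq, OrthonormalBasis.finrank_span_image, Fin.card_Iic]
  have hV : finrank 𝕜 V = n - k := by
    rw [OrthonormalBasis.finrank_span_image, Fin.card_Ici]
  have hUV : U ⊓ V ≠ ⊥ := by
    intro h
    have := Submodule.finrank_sup_add_finrank_inf_eq U V
    rw [h, finrank_bot, hU, hV] at this
    have := Submodule.finrank_le (U ⊔ V)
    omega
  obtain ⟨x, ⟨hxU, hxV⟩, hx0⟩ := Submodule.ne_bot_iff _ |>.mp hUV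
  have hσ := T.singularValues_nonneg k
  have hTop : ∀ i ∈ (Finset.Iic k' : Set (Fin n)), T.singularValues k ≤ T.singularValues i :=
    fun i hi => T.singularValues_antitone
      (show (i : ℕ) ≤ k from (Finset.mem_Iic.mp hi : i ≤ k'))
  have hBot : ∀ i ∈ (Finset.Ici k' : Set (Fin n)),
      (T ∘ₗ W).singularValues i ≤ (T ∘ₗ W).singularValues k :=
    fun i hi => (T ∘ₗ W).singularValues_antitone
      (show k ≤ (i : ℕ) from (Finset.mem_Ici.mp hi : k' ≤ i))
  refine le_of_mul_le_mul_right ?_ (norm_pos_iff.mpr hx0)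
  calc T.singularValues k * m * ‖x‖ ≤ T.singularValues k * ‖W x‖ := by
        rw [mul_assoc]; exact mul_le_mul_of_nonneg_left (hW x) hσ
    _ ≤ ‖T (W x)‖ := T.le_norm_apply_of_mem_span hσ hTop hxU
    _ ≤ (T ∘ₗ W).singularValues k * ‖x‖ :=
        (T ∘ₗ W).norm_apply_le_of_mem_span ((T ∘ₗ W).singularValues_nonneg k) hBot hxV

end LinearMap

namespace PaperProj

open Matrix

section singularValues

variable {ι : Type*} [Fintype ι] [DecidableEq ι]

lemma toEuclideanLin_transpose_mul_self (M : Matrix ι ι ℝ) :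
    toEuclideanLin (Mᵀ * M) = (toEuclideanLin M).adjoint ∘ₗ toEuclideanLin M := by
  rw [← toEuclideanLin_conjTranspose_eq_adjoint, conjTranspose_eq_transpose_of_trivial]
  simp [← coe_toEuclideanCLM_eq_toEuclideanLin]

/-- `sval` is indexed from `1`; at `j = 0` both sides are the largest singular value. -/
lemma sval_eq_singularValues (M : Matrix ι ι ℝ) (j : ℕ) :
    sval M j = (toEuclideanLin M).singularValues (j - 1) := by
  set T := toEuclideanLin M
  set σ : Fin (Fintype.card ι) → ℝ := fun k => T.singularValues k
  have hA : (Mᵀ * M).IsHermitian := by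
    simpa [conjTranspose_eq_transpose_of_trivial] using isHermitian_conjTranspose_mul_self M
  have hmultiset : (Finset.univ.val.map fun i => √(hA.eigenvalues i)) =
      ((List.ofFn σ).reverse : Multiset ℝ) := by
    rw [Multiset.coe_reverse, ← Fin.univ_val_map, ← Multiset.map_univ_val_equiv
      (Fintype.equivOfCardEq (Fintype.card_fin _)), Multiset.map_map]
    congr 1
    funext k
    simp only [Function.comp_apply, IsHermitian.eigenvalues, Equiv.symm_apply_apply,
      IsHermitian.eigenvalues₀, σ]
    rw [T.singularValues_fin finrank_euclideanSpace]
    congr 2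
    exact toEuclideanLin_transpose_mul_self M
  have hsort : (((List.ofFn σ).reverse : Multiset ℝ).sort (· ≤ ·)) = (List.ofFn σ).reverse :=
    List.mergeSort_eq_self _ (List.sortedLE_reverse.mpr (List.sortedGE_ofFn_iff.mpr
      (T.singularValues_antitone.comp_monotone Fin.val_strictMono.monotone))).pairwise
  unfold sval
  simp only [hmultiset, hsort, List.reverse_reverse]
  rw [List.getD_eq_getElem?_getD, List.getElem?_ofFn]
  by_cases hj : j - 1 < Fintype.card ι
  · simp [hj, σ]
  · rw [T.singularValues_of_finrank_le (by rw [finrank_euclideanSpace]; omega)]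
    simp [hj]

lemma sval_nonneg (M : Matrix ι ι ℝ) (j : ℕ) : 0 ≤ sval M j := by
  rw [sval_eq_singularValues]
  exact LinearMap.singularValues_nonneg _ _

lemma sval_le_of_norm_le {M : Matrix ι ι ℝ} {C : ℝ} (hC : 0 ≤ C)
    (h : ∀ x, ‖toEuclideanCLM (𝕜 := ℝ) M x‖ ≤ C * ‖x‖) (j : ℕ) : sval M j ≤ C := by
  rw [sval_eq_singularValues]
  exact LinearMap.singularValues_le_of_norm_apply_le _ hC h _

lemma le_sval_of_le_norm {M : Matrix ι ι ℝ} {m : ℝ}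
    (h : ∀ x, m * ‖x‖ ≤ ‖toEuclideanCLM (𝕜 := ℝ) M x‖) {j : ℕ} (hj₁ : 1 ≤ j)
    (hj : j ≤ Fintype.card ι) : m ≤ sval M j := by
  rw [sval_eq_singularValues]
  exact LinearMap.le_singularValues_of_le_norm_apply _ h (by rw [finrank_euclideanSpace]; omega)

lemma sval_mul_le_sval_mul (Q : Matrix ι ι ℝ) {W : Matrix ι ι ℝ} {m : ℝ}
    (hW : ∀ x, m * ‖x‖ ≤ ‖toEuclideanCLM (𝕜 := ℝ) W x‖) (j : ℕ) :
    sval Q j * m ≤ sval (Q * W) j := by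
  have h : toEuclideanLin (Q * W) = toEuclideanLin Q ∘ₗ toEuclideanLin W := by
    simp [← coe_toEuclideanCLM_eq_toEuclideanLin]
  rw [sval_eq_singularValues, sval_eq_singularValues, h]
  exact LinearMap.singularValues_mul_le_singularValues_comp _ _ hW _

lemma sval_pos {M : Matrix ι ι ℝ} {j : ℕ} (hj₁ : 1 ≤ j) (hj : j ≤ M.rank) : 0 < sval M j := by
  rw [sval_eq_singularValues, LinearMap.singularValues_pos_iff_lt_finrank_range,
    toEuclideanLin_eq_toLin_orthonormal, ← rank_eq_finrank_range_toLin]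
  omega

end singularValues

def svfSeq (σ : ℕ → ℝ) (s : ℝ) : ℝ :=
  (∏ j ∈ Finset.Icc 1 ⌊s⌋₊, σ j) * σ ⌈s⌉₊ ^ (s - ⌊s⌋₊)

section svfSeq

variable {σ τ : ℕ → ℝ} {s : ℝ}

lemma svfSeq_nonneg (hσ : ∀ j, 0 ≤ σ j) : 0 ≤ svfSeq σ s :=
  mul_nonneg (Finset.prod_nonneg fun j _ => hσ j) (Real.rpow_nonneg (hσ _) _)

lemma svfSeq_pos (hs : 0 < s) (hσ : ∀ j, 1 ≤ j → j ≤ ⌈s⌉₊ → 0 < σ j) : 0 < svfSeq σ s := by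
  refine mul_pos (Finset.prod_pos fun j hj => ?_) (Real.rpow_pos_of_pos ?_ _)
  · obtain ⟨hj₁, hj⟩ := Finset.mem_Icc.mp hj
    exact hσ j hj₁ (hj.trans (Nat.floor_le_ceil s))
  · exact hσ _ (Nat.one_le_ceil_iff.mpr hs) le_rfl

lemma svfSeq_mono (hs : 0 < s) (hσ : ∀ j, 0 ≤ σ j)
    (h : ∀ j, 1 ≤ j → j ≤ ⌈s⌉₊ → σ j ≤ τ j) : svfSeq σ s ≤ svfSeq τ s := by
  have hfloor : ∀ j ∈ Finset.Icc 1 ⌊s⌋₊, σ j ≤ τ j := fun j hj =>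
    h j (Finset.mem_Icc.mp hj).1 ((Finset.mem_Icc.mp hj).2.trans (Nat.floor_le_ceil s))
  exact mul_le_mul (Finset.prod_le_prod (fun j _ => hσ j) hfloor)
    (Real.rpow_le_rpow (hσ _) (h _ (Nat.one_le_ceil_iff.mpr hs) le_rfl)
      (sub_nonneg.mpr (Nat.floor_le hs.le)))
    (Real.rpow_nonneg (hσ _) _) (Finset.prod_nonneg fun j hj => (hσ j).trans (hfloor j hj))

lemma svfSeq_const_mul {c : ℝ} (hc : 0 ≤ c) (hs : 0 < s) (hσ : ∀ j, 0 ≤ σ j) :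
    svfSeq (fun j => c * σ j) s = c ^ s * svfSeq σ s := by
  have hsplit : c ^ s = c ^ ⌊s⌋₊ * c ^ (s - ⌊s⌋₊) := by
    rw [← Real.rpow_natCast, ← Real.rpow_add' hc (by simpa using hs.ne'), add_sub_cancel]
  rw [svfSeq, svfSeq, Finset.prod_mul_distrib, Finset.prod_const, Nat.card_Icc,
    Nat.add_sub_cancel, Real.mul_rpow hc (hσ _), hsplit]
  ring

lemma svfSeq_const {c : ℝ} (hc : 0 ≤ c) (hs : 0 < s) : svfSeq (fun _ => c) s = c ^ s := by
  simpa [svfSeq] using svfSeq_const_mul (σ := fun _ => 1) hc hs fun _ => zero_le_one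

end svfSeq

section svf

variable {ι : Type*} [Fintype ι] [DecidableEq ι] {s : ℝ}

lemma svf_of_le_card (M : Matrix ι ι ℝ) (hs : s ≤ Fintype.card ι) :
    svf s M = svfSeq (sval M) s :=
  if_pos hs

lemma svf_of_card_lt (M : Matrix ι ι ℝ) (hs : (Fintype.card ι : ℝ) < s) :
    svf s M = |M.det| ^ (s / Fintype.card ι) :=
  if_neg hs.not_ge

lemma svf_nonneg (s : ℝ) (M : Matrix ι ι ℝ) : 0 ≤ svf s M := by
  rcases le_or_gt s (Fintype.card ι) with hs | hs
  · rw [svf_of_le_card M hs]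
    exact svfSeq_nonneg (sval_nonneg M)
  · rw [svf_of_card_lt M hs]
    positivity

lemma svf_le_rpow {M : Matrix ι ι ℝ} {C : ℝ} (hs : 0 < s) (hsd : s ≤ Fintype.card ι)
    (hC : 0 ≤ C) (h : ∀ x, ‖toEuclideanCLM (𝕜 := ℝ) M x‖ ≤ C * ‖x‖) : svf s M ≤ C ^ s := by
  rw [svf_of_le_card M hsd, ← svfSeq_const hC hs]
  exact svfSeq_mono hs (sval_nonneg M) fun j _ _ => sval_le_of_norm_le hC h j

lemma rpow_le_svf {M : Matrix ι ι ℝ} {m : ℝ} (hs : 0 < s) (hsd : s ≤ Fintype.card ι)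
    (hm : 0 ≤ m) (h : ∀ x, m * ‖x‖ ≤ ‖toEuclideanCLM (𝕜 := ℝ) M x‖) : m ^ s ≤ svf s M := by
  rw [svf_of_le_card M hsd, ← svfSeq_const hm hs]
  refine svfSeq_mono hs (fun _ => hm) fun j hj₁ hj => le_sval_of_le_norm h hj₁ ?_
  exact_mod_cast hj.trans (Nat.ceil_le.mpr hsd)

lemma svf_mul_rpow_le_svf_mul (Q : Matrix ι ι ℝ) {W : Matrix ι ι ℝ} {m : ℝ} (hs : 0 < s)
    (hsd : s ≤ Fintype.card ι) (hm : 0 ≤ m)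
    (hW : ∀ x, m * ‖x‖ ≤ ‖toEuclideanCLM (𝕜 := ℝ) W x‖) :
    svf s Q * m ^ s ≤ svf s (Q * W) := by
  rw [svf_of_le_card Q hsd, svf_of_le_card (Q * W) hsd, mul_comm,
    ← svfSeq_const_mul hm hs (sval_nonneg Q)]
  refine svfSeq_mono hs (fun j => mul_nonneg hm (sval_nonneg Q j)) fun j _ _ => ?_
  rw [mul_comm]
  exact sval_mul_le_sval_mul Q hW j

lemma svf_pos_of_le_rank {M : Matrix ι ι ℝ} (hs : 0 < s) (hsr : s ≤ M.rank) : 0 < svf s M := by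
  have hsd : s ≤ Fintype.card ι := hsr.trans (by exact_mod_cast M.rank_le_card_width)
  rw [svf_of_le_card M hsd]
  exact svfSeq_pos hs fun j hj₁ hj => sval_pos hj₁ (hj.trans (Nat.ceil_le.mpr hsr))

lemma svf_mul_of_card_lt (Q W : Matrix ι ι ℝ) (hs : (Fintype.card ι : ℝ) < s) :
    svf s (Q * W) = |Q.det| ^ (s / Fintype.card ι) * svf s W := by
  rw [svf_of_card_lt _ hs, svf_of_card_lt _ hs, det_mul, abs_mul,
    Real.mul_rpow (abs_nonneg _) (abs_nonneg _)]

end svf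

lemma transpose_mul_mul_mul_eq {ι : Type*} [Fintype ι] {G A B : Matrix ι ι ℝ} {a b : ℝ}
    (hA : Aᵀ * G * A = a ^ 2 • G) (hB : Bᵀ * G * B = b ^ 2 • G) :
    (A * B)ᵀ * G * (A * B) = (a * b) ^ 2 • G := by
  calc (A * B)ᵀ * G * (A * B) = Bᵀ * (Aᵀ * G * A) * B := by
        simp only [transpose_mul, Matrix.mul_assoc]
    _ = (a * b) ^ 2 • G := by
        rw [hA, Matrix.mul_smul, Matrix.smul_mul, hB, smul_smul, mul_pow, mul_comm]

section similarity

variable {ι : Type*} [Fintype ι] [DecidableEq ι]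

lemma inner_toEuclideanCLM_transpose_mul (M G : Matrix ι ι ℝ) (x y : EuclideanSpace ℝ ι) :
    ⟪x, toEuclideanCLM (𝕜 := ℝ) (Mᵀ * G) y⟫ =
      ⟪toEuclideanCLM (𝕜 := ℝ) M x, toEuclideanCLM (𝕜 := ℝ) G y⟫ := by
  rw [← conjTranspose_eq_transpose_of_trivial, ← star_eq_conjTranspose, map_mul, map_star,
    ContinuousLinearMap.star_eq_adjoint, mul_apply_eq_comp,
    ContinuousLinearMap.adjoint_inner_right]

lemma norm_toEuclideanCLM_apply_of_transpose_mul_mul_eq {P W : Matrix ι ι ℝ} {ρ : ℝ}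
    (hρ : 0 ≤ ρ) (hW : Wᵀ * (Pᵀ * P) * W = ρ ^ 2 • (Pᵀ * P)) (x : EuclideanSpace ℝ ι) :
    ‖toEuclideanCLM (𝕜 := ℝ) P (toEuclideanCLM (𝕜 := ℝ) W x)‖ =
      ρ * ‖toEuclideanCLM (𝕜 := ℝ) P x‖ := by
  have hsq : ∀ y, ‖toEuclideanCLM (𝕜 := ℝ) P y‖ ^ 2 = ⟪y, toEuclideanCLM (𝕜 := ℝ) (Pᵀ * P) y⟫ :=
    fun y => by rw [inner_toEuclideanCLM_transpose_mul, real_inner_self_eq_norm_sq]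
  refine (pow_left_inj₀ (norm_nonneg _) (by positivity) two_ne_zero).mp ?_
  rw [mul_pow, hsq, hsq, ← inner_toEuclideanCLM_transpose_mul, ← mul_apply_eq_comp, ← map_mul,
    Matrix.mul_assoc, ← Matrix.mul_assoc _ _ W, hW, map_smul, _root_.smul_apply,
    real_inner_smul_right]

lemma _root_.Matrix.PosDef.exists_isUnit_eq_transpose_mul_self {G : Matrix ι ι ℝ} (hG : G.PosDef) :
    ∃ P : Matrix ι ι ℝ, IsUnit P ∧ G = Pᵀ * P := by
  obtain ⟨P, rfl⟩ : ∃ P : Matrix ι ι ℝ, G = star P * P := by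
    open scoped MatrixOrder in
    exact CStarAlgebra.nonneg_iff_eq_star_mul_self.mp hG.posSemidef.nonneg
  refine ⟨P, ?_, by rw [star_eq_conjTranspose, conjTranspose_eq_transpose_of_trivial]⟩
  rw [isUnit_iff_isUnit_det, isUnit_iff_ne_zero]
  intro hP
  simpa [hP] using hG.det_pos

lemma _root_.Matrix.PosDef.exists_norm_bounds {G : Matrix ι ι ℝ} (hG : G.PosDef) :
    ∃ K > 0, ∀ (W : Matrix ι ι ℝ) (ρ : ℝ), 0 ≤ ρ → Wᵀ * G * W = ρ ^ 2 • G →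
      ∀ x, ρ * ‖x‖ ≤ K * ‖toEuclideanCLM (𝕜 := ℝ) W x‖ ∧
        ‖toEuclideanCLM (𝕜 := ℝ) W x‖ ≤ K * ρ * ‖x‖ := by
  obtain ⟨P, hP, rfl⟩ := hG.exists_isUnit_eq_transpose_mul_self
  set a := ‖toEuclideanCLM (𝕜 := ℝ) P‖
  set b := ‖toEuclideanCLM (𝕜 := ℝ) P⁻¹‖
  have hPa : ∀ y, ‖toEuclideanCLM (𝕜 := ℝ) P y‖ ≤ a * ‖y‖ :=
    (toEuclideanCLM (𝕜 := ℝ) P).le_opNorm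
  have hPb : ∀ y, ‖y‖ ≤ b * ‖toEuclideanCLM (𝕜 := ℝ) P y‖ := fun y => by
    have hy : toEuclideanCLM (𝕜 := ℝ) P⁻¹ (toEuclideanCLM (𝕜 := ℝ) P y) = y := by
      rw [← mul_apply_eq_comp, ← map_mul, nonsing_inv_mul _ ((isUnit_iff_isUnit_det P).mp hP),
        map_one, one_apply_eq_self]
    simpa [hy] using (toEuclideanCLM (𝕜 := ℝ) P⁻¹).le_opNorm (toEuclideanCLM (𝕜 := ℝ) P y)
  have ha : 0 ≤ a := norm_nonneg _
  have hb : 0 ≤ b := norm_nonneg _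
  have hK : a * b ≤ max 1 (a * b) := le_max_right _ _
  refine ⟨max 1 (a * b), by positivity, fun W ρ hρ hW x => ?_⟩
  have hPW := norm_toEuclideanCLM_apply_of_transpose_mul_mul_eq hρ hW x
  constructor
  · calc ρ * ‖x‖ ≤ ρ * (b * ‖toEuclideanCLM (𝕜 := ℝ) P x‖) := by gcongr; exact hPb x
      _ = b * ‖toEuclideanCLM (𝕜 := ℝ) P (toEuclideanCLM (𝕜 := ℝ) W x)‖ := by rw [hPW]; ring
      _ ≤ b * (a * ‖toEuclideanCLM (𝕜 := ℝ) W x‖) := by gcongr; exact hPa _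
      _ = a * b * ‖toEuclideanCLM (𝕜 := ℝ) W x‖ := by ring
      _ ≤ max 1 (a * b) * ‖toEuclideanCLM (𝕜 := ℝ) W x‖ := by gcongr
  · calc ‖toEuclideanCLM (𝕜 := ℝ) W x‖
        ≤ b * ‖toEuclideanCLM (𝕜 := ℝ) P (toEuclideanCLM (𝕜 := ℝ) W x)‖ := hPb _
      _ = ρ * (b * ‖toEuclideanCLM (𝕜 := ℝ) P x‖) := by rw [hPW]; ring
      _ ≤ ρ * (b * (a * ‖x‖)) := by gcongr; exact hPa x
      _ = a * b * ρ * ‖x‖ := by ring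
      _ ≤ max 1 (a * b) * ρ * ‖x‖ := by gcongr

lemma abs_det_of_transpose_mul_mul_eq {G W : Matrix ι ι ℝ} {ρ : ℝ} (hG : G.det ≠ 0)
    (hρ : 0 ≤ ρ) (hW : Wᵀ * G * W = ρ ^ 2 • G) : |W.det| = ρ ^ Fintype.card ι := by
  have h := congrArg det hW
  rw [det_mul, det_mul, det_transpose, det_smul, ← pow_mul, mul_comm 2, pow_mul,
    mul_right_comm, mul_left_inj' hG, ← sq] at h
  rw [← sq_eq_sq₀ (abs_nonneg _) (by positivity), sq_abs, h]

lemma transpose_mul_mul_pow {G M : Matrix ι ι ℝ} {r : ℝ} (hM : Mᵀ * G * M = r ^ 2 • G)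
    (n : ℕ) : (M ^ n)ᵀ * G * M ^ n = (r ^ n) ^ 2 • G := by
  induction n with
  | zero => simp
  | succ n ih => rw [pow_succ, pow_succ]; exact transpose_mul_mul_mul_eq ih hM

lemma seminorm_pow_mulVec_le {M : Matrix ι ι ℝ} {ν : Seminorm ℝ (ι → ℝ)} {c : ℝ} (hc : 0 ≤ c)
    (hM : ∀ x, ν (M *ᵥ x) ≤ c * ν x) (n : ℕ) (x : ι → ℝ) : ν (M ^ n *ᵥ x) ≤ c ^ n * ν x := by
  induction n with
  | zero => simp
  | succ n ih =>
    calc ν (M ^ (n + 1) *ᵥ x) = ν (M *ᵥ (M ^ n *ᵥ x)) := by rw [pow_succ', mulVec_mulVec]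
      _ ≤ c * (c ^ n * ν x) := (hM _).trans (mul_le_mul_of_nonneg_left ih hc)
      _ = c ^ (n + 1) * ν x := by ring

lemma lt_one_of_contracting [Nonempty ι] {G M : Matrix ι ι ℝ} (hG : G.PosDef) {r : ℝ}
    (hr : 0 ≤ r) (hM : Mᵀ * G * M = r ^ 2 • G) {ν : Seminorm ℝ (ι → ℝ)}
    (hν : ∀ x, x ≠ 0 → 0 < ν x) {c : ℝ} (hc : c < 1) (hMν : ∀ x, ν (M *ᵥ x) ≤ c * ν x) :
    r < 1 := by
  obtain ⟨K, hK, hbound⟩ := hG.exists_norm_bounds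
  obtain ⟨m, hm, hνm⟩ := (ν.comp (WithLp.linearEquiv 2 ℝ (ι → ℝ)).toLinearMap)
    |>.exists_pos_mul_norm_le fun x hx => hν _ (by simpa using hx)
  obtain ⟨x, hx⟩ := exists_ne (0 : EuclideanSpace ℝ ι)
  have hνx : 0 < ν x.ofLp := hν _ (by simpa using hx)
  have hc0 : 0 ≤ c := nonneg_of_mul_nonneg_left ((apply_nonneg ν _).trans (hMν _)) hνx
  have key : ∀ n : ℕ, r ^ n * ‖x‖ ≤ K / m * ν x.ofLp * c ^ n := fun n => by
    have h₁ := (hbound (M ^ n) (r ^ n) (pow_nonneg hr n) (transpose_mul_mul_pow hM n) x).1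
    have h₂ : m * ‖toEuclideanCLM (𝕜 := ℝ) (M ^ n) x‖ ≤ ν (M ^ n *ᵥ x.ofLp) := hνm _
    calc r ^ n * ‖x‖ ≤ K * ‖toEuclideanCLM (𝕜 := ℝ) (M ^ n) x‖ := h₁
      _ ≤ K * (ν (M ^ n *ᵥ x.ofLp) / m) := by
          gcongr
          rw [le_div_iff₀ hm, mul_comm]
          exact h₂
      _ ≤ K * (c ^ n * ν x.ofLp / m) := by gcongr; exact seminorm_pow_mulVec_le hc0 hMν n _
      _ = K / m * ν x.ofLp * c ^ n := by ring
  by_contra! h1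
  have hlim : Filter.Tendsto (fun n : ℕ => K / m * ν x.ofLp * c ^ n) Filter.atTop (nhds 0) := by
    simpa using (tendsto_pow_atTop_nhds_zero_of_lt_one hc0 hc).const_mul (K / m * ν x.ofLp)
  have : ‖x‖ ≤ 0 := ge_of_tendsto' hlim fun n =>
    (le_mul_of_one_le_left (norm_nonneg x) (one_le_pow₀ h1)).trans (key n)
  exact hx (norm_le_zero_iff.mp this)

end similarity

section words

variable {ι : Type*} [Fintype ι] [DecidableEq ι] {N : ℕ}

lemma wordProd_zero (A : Fin N → Matrix ι ι ℝ) (i : Fin 0 → Fin N) : wordProd A i = 1 := rfl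

lemma wordProd_succ (A : Fin N → Matrix ι ι ℝ) {n : ℕ} (i : Fin (n + 1) → Fin N) :
    wordProd A i = A (i 0) * wordProd A (Fin.tail i) := by
  rw [wordProd, List.ofFn_succ, List.prod_cons]
  rfl

lemma transpose_mul_mul_wordProd {G : Matrix ι ι ℝ} {A : Fin N → Matrix ι ι ℝ}
    {r : Fin N → ℝ} (hA : ∀ a, (A a)ᵀ * G * A a = r a ^ 2 • G) {n : ℕ} (i : Fin n → Fin N) :
    (wordProd A i)ᵀ * G * wordProd A i = (∏ j, r (i j)) ^ 2 • G := by
  induction n with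
  | zero => simp [wordProd_zero]
  | succ n ih =>
    rw [wordProd_succ, Fin.prod_univ_succ]
    exact transpose_mul_mul_mul_eq (hA _) (ih _)

def IsBoundedDistortion (A : Fin N → Matrix ι ι ℝ) (r : Fin N → ℝ) (K : ℝ) : Prop :=
  ∀ {n : ℕ} (i : Fin n → Fin N) (x : EuclideanSpace ℝ ι),
    (∏ j, r (i j)) * ‖x‖ ≤ K * ‖toEuclideanCLM (𝕜 := ℝ) (wordProd A i) x‖ ∧
      ‖toEuclideanCLM (𝕜 := ℝ) (wordProd A i) x‖ ≤ K * (∏ j, r (i j)) * ‖x‖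

variable {A : Fin N → Matrix ι ι ℝ} {r : Fin N → ℝ} {K : ℝ}

lemma exists_isBoundedDistortion {G : Matrix ι ι ℝ} (hG : G.PosDef) (hr : ∀ a, 0 ≤ r a)
    (hA : ∀ a, (A a)ᵀ * G * A a = r a ^ 2 • G) : ∃ K > 0, IsBoundedDistortion A r K := by
  obtain ⟨K, hK, hbound⟩ := hG.exists_norm_bounds
  exact ⟨K, hK, fun i => hbound _ _ (Finset.prod_nonneg fun _ _ => hr _)
    (transpose_mul_mul_wordProd hA i)⟩

lemma abs_det_wordProd {G : Matrix ι ι ℝ} (hG : G.PosDef) (hr : ∀ a, 0 ≤ r a)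
    (hA : ∀ a, (A a)ᵀ * G * A a = r a ^ 2 • G) {n : ℕ} (i : Fin n → Fin N) :
    |(wordProd A i).det| = (∏ j, r (i j)) ^ Fintype.card ι :=
  abs_det_of_transpose_mul_mul_eq hG.det_pos.ne' (Finset.prod_nonneg fun _ _ => hr _)
    (transpose_mul_mul_wordProd hA i)

lemma IsBoundedDistortion.div_mul_norm_le (hA : IsBoundedDistortion A r K) (hK : 0 < K)
    {n : ℕ} (i : Fin n → Fin N) (x : EuclideanSpace ℝ ι) :
    (∏ j, r (i j)) / K * ‖x‖ ≤ ‖toEuclideanCLM (𝕜 := ℝ) (wordProd A i) x‖ := by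
  rw [div_mul_eq_mul_div, div_le_iff₀' hK]
  exact (hA i x).1

lemma summable_svf_mul_wordProd (hr : ∀ a, 0 < r a) (hK : 0 < K)
    (hA : IsBoundedDistortion A r K) (Q : Matrix ι ι ℝ) {s : ℝ} (hs : 0 < s)
    (hsum : Summable fun n : ℕ => ∑ i : Fin (n + 1) → Fin N, svf s (wordProd A i)) :
    Summable fun n : ℕ => ∑ i : Fin (n + 1) → Fin N, svf s (Q * wordProd A i) := by
  rcases le_or_gt s (Fintype.card ι) with hsd | hsd
  · set q := ‖toEuclideanCLM (𝕜 := ℝ) Q‖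
    refine summable_sum_of_le_mul (C := (q * K ^ 2) ^ s) (fun _ _ => svf_nonneg _ _)
      (fun n i => ?_) hsum
    have hρ : 0 < ∏ j, r (i j) := Finset.prod_pos fun _ _ => hr _
    have hQW : ∀ x, ‖toEuclideanCLM (𝕜 := ℝ) (Q * wordProd A i) x‖ ≤
        q * K * (∏ j, r (i j)) * ‖x‖ := fun x => by
      rw [map_mul, mul_apply_eq_comp, mul_assoc q, mul_assoc q]
      exact (toEuclideanCLM (𝕜 := ℝ) Q).le_opNorm_of_le (hA i x).2
    calc svf s (Q * wordProd A i) ≤ (q * K * ∏ j, r (i j)) ^ s :=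
          svf_le_rpow hs hsd (by positivity) hQW
      _ = (q * K ^ 2) ^ s * ((∏ j, r (i j)) / K) ^ s := by
          rw [← Real.mul_rpow (by positivity) (by positivity)]
          congr 1
          field_simp
      _ ≤ (q * K ^ 2) ^ s * svf s (wordProd A i) := by
          gcongr
          exact rpow_le_svf hs hsd (by positivity) (hA.div_mul_norm_le hK i)
  · exact summable_sum_of_le_mul (C := |Q.det| ^ (s / Fintype.card ι))
      (fun _ _ => svf_nonneg _ _) (fun _ _ => (svf_mul_of_card_lt _ _ hsd).le) hsum

lemma summable_svf_wordProd_of_summable_svf_mul (hr : ∀ a, 0 < r a) (hK : 0 < K)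
    (hA : IsBoundedDistortion A r K) {Q : Matrix ι ι ℝ} {s : ℝ} (hs : 0 < s)
    (hsr : s ≤ Q.rank)
    (hsum : Summable fun n : ℕ => ∑ i : Fin (n + 1) → Fin N, svf s (Q * wordProd A i)) :
    Summable fun n : ℕ => ∑ i : Fin (n + 1) → Fin N, svf s (wordProd A i) := by
  have hsd : s ≤ Fintype.card ι := hsr.trans (by exact_mod_cast Q.rank_le_card_width)
  have hQ : 0 < svf s Q := svf_pos_of_le_rank hs hsr
  refine summable_sum_of_le_mul (C := (K ^ 2) ^ s / svf s Q) (fun _ _ => svf_nonneg _ _)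
    (fun n i => ?_) hsum
  have hρ : 0 < ∏ j, r (i j) := Finset.prod_pos fun _ _ => hr _
  calc svf s (wordProd A i) ≤ (K * ∏ j, r (i j)) ^ s :=
        svf_le_rpow hs hsd (by positivity) fun x => (hA i x).2
    _ = (K ^ 2) ^ s / svf s Q * (svf s Q * ((∏ j, r (i j)) / K) ^ s) := by
        rw [← mul_assoc, div_mul_cancel₀ _ hQ.ne', ← Real.mul_rpow (by positivity) (by positivity)]
        congr 1
        field_simp
    _ ≤ (K ^ 2) ^ s / svf s Q * svf s (Q * wordProd A i) := by
        gcongr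
        exact svf_mul_rpow_le_svf_mul Q hs hsd (by positivity) (hA.div_mul_norm_le hK i)

lemma exists_summable_svf_wordProd [Nonempty ι] (hr : ∀ a, 0 < r a) (hr1 : ∀ a, r a < 1)
    (hdet : ∀ {n} (i : Fin n → Fin N), |(wordProd A i).det| = (∏ j, r (i j)) ^ Fintype.card ι) :
    ∃ s > 0, Summable fun n : ℕ => ∑ i : Fin (n + 1) → Fin N, svf s (wordProd A i) := by
  have hlim : Filter.Tendsto (fun s : ℝ => ∑ a, r a ^ s) Filter.atTop (nhds 0) := by
    simpa using tendsto_finsetSum Finset.univ fun a _ =>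
      tendsto_rpow_atTop_of_base_lt_one _ (by linarith [hr a]) (hr1 a)
  obtain ⟨s, hq, hs⟩ := ((hlim.eventually (gt_mem_nhds one_pos)).and
    (Filter.eventually_gt_atTop (Fintype.card ι : ℝ))).exists
  have hs0 : 0 < s := lt_of_le_of_lt (Nat.cast_nonneg _) hs
  have hq0 : 0 ≤ ∑ a, r a ^ s := Finset.sum_nonneg fun a _ => by have := hr a; positivity
  -- for `s > d`, `φ^s(A_𝚒) = |det A_𝚒|^{s/d} = ∏_j r_{i_j}^s` is multiplicative in `𝚒`
  have hsum : ∀ n, ∑ i : Fin (n + 1) → Fin N, svf s (wordProd A i) = (∑ a, r a ^ s) ^ (n + 1) :=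
    fun n => by
      simp only [svf_of_card_lt _ hs, hdet, Fintype.sum_pow]
      refine Finset.sum_congr rfl fun i _ => ?_
      rw [← Real.rpow_natCast, ← Real.rpow_mul (Finset.prod_nonneg fun _ _ => (hr _).le),
        mul_div_cancel₀ _ (by positivity), Real.finsetProd_rpow _ _ fun _ _ => (hr _).le]
  refine ⟨s, hs0, ?_⟩
  simp only [hsum]
  exact (summable_nat_add_iff 1).mpr (summable_geometric_of_lt_one hq0 hq)

end words

theorem statement1_general {d N : ℕ}
    (A : Fin N → Matrix (Fin d) (Fin d) ℝ)
    (hContr : IsContractingTuple A)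
    (hSim : ∃ G : Matrix (Fin d) (Fin d) ℝ, G.PosDef ∧
      ∀ i, ∃ r : ℝ, 0 < r ∧ (A i)ᵀ * G * A i = (r ^ 2) • G)
    (Q : Matrix (Fin d) (Fin d) ℝ) (hrank : affDim A ≤ (Q.rank : ℝ)) :
    sInf {s : ℝ | 0 < s ∧
        Summable fun n : ℕ => ∑ i : Fin (n + 1) → Fin N, svf s (Q * wordProd A i)} =
      affDim A := by
  rcases isEmpty_or_nonempty (Fin d) with hd | hd
  · have hQ : ∀ {n} (i : Fin n → Fin N), Q * wordProd A i = wordProd A i :=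
      fun _ => Subsingleton.elim _ _
    simp only [hQ, affDim]
  obtain ⟨G, hG, hsim⟩ := hSim
  choose r hr hA using hsim
  obtain ⟨K, hK, hdist⟩ := exists_isBoundedDistortion hG (fun a => (hr a).le) hA
  obtain ⟨ν, c, hν, hc, hνA⟩ := hContr
  have hr1 : ∀ a, r a < 1 := fun a => lt_one_of_contracting hG (hr a).le (hA a) hν hc (hνA a)
  obtain ⟨s₀, hs₀, hsum₀⟩ :=
    exists_summable_svf_wordProd hr hr1 (abs_det_wordProd hG (fun a => (hr a).le) hA)
  exact csInf_eq_csInf_of_subset_of_forall_mem ⟨s₀, hs₀, hsum₀⟩ ⟨0, fun s hs => hs.1.le⟩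
    (fun s hs => ⟨hs.1, summable_svf_mul_wordProd hr hK hdist Q hs.1 hs.2⟩)
    (fun s hs hsr => ⟨hs.1, summable_svf_wordProd_of_summable_svf_mul hr hK hdist hs.1 hsr hs.2⟩)
    hrank

/-- Theorem 2(i). If the invertible contracting tuple `(A_1,…,A_N)`
consists of similarities with respect to some inner product on `ℝ^d` (encoded by a positive
definite matrix `G`), and `dimaff(A_1,…,A_N) ≤ rank Q`, then
`inf {s > 0 : ∑_{n≥1} ∑_{|i|=n} φ^s(Q A_i) < ∞} = dimaff(A_1,…,A_N)`. -/
theorem statement1 {d N : ℕ} (hN : 2 ≤ N)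
    (A : Fin N → Matrix (Fin d) (Fin d) ℝ) (hInv : ∀ i, IsUnit (A i))
    (hContr : IsContractingTuple A)
    (hSim : ∃ G : Matrix (Fin d) (Fin d) ℝ, G.PosDef ∧
      ∀ i, ∃ r : ℝ, 0 < r ∧ (A i)ᵀ * G * A i = (r ^ 2) • G)
    (Q : Matrix (Fin d) (Fin d) ℝ) (hrank : affDim A ≤ (Q.rank : ℝ)) :
    sInf {s : ℝ | 0 < s ∧
        Summable fun n : ℕ => ∑ i : Fin (n + 1) → Fin N, svf s (Q * wordProd A i)} =
      affDim A :=
  statement1_general A hContr hSim Q hrank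

end PaperProj
end
end

section
/- Let A_1,…,A_N ∈ GL_d(ℝ), let Q be a d×d real matrix, and let k be an integer with k ≤ rank Q such that (A_1,…,A_N) is k-irreducible. Then the quantity κ := min over all B ∈ M_d(ℝ) satisfying B² = B = Bᵀ and rank B = k of (max over words 𝚔 with |𝚔| ≤ C(d,k) of σ_k(Q A_𝚔 B)) is strictly positive, where C(d,k) denotes the binomial coefficient d choose k. -/
open scoped BigOperators Kronecker

noncomputable section

open Finset Matrix

theorem List.le_getD_of_lt_countP {α : Type*} [LinearOrder α] {l : List α}
    (hl : l.Pairwise (· ≥ ·)) {c : α} {j : ℕ} (hj : j < l.countP (fun x => decide (c ≤ x)))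
    (x₀ : α) : c ≤ l.getD j x₀ := by
  induction l generalizing j with
  | nil => simp at hj
  | cons b t ih =>
    obtain ⟨hb_ge, ht⟩ := List.pairwise_cons.1 hl
    by_cases hcb : c ≤ b
    · rcases j with _ | j
      · simpa using hcb
      · simp only [List.countP_cons, hcb, decide_true, if_true] at hj
        simpa using ih ht (by omega)
    · have ht0 : t.countP (fun x => decide (c ≤ x)) = 0 :=
        List.countP_eq_zero.2 fun a ha => by simpa using (hb_ge a ha).trans_lt (not_le.1 hcb)
      simp [hcb, ht0] at hj

section Spectral

variable {n : Type*} [Fintype n]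

theorem OrthonormalBasis.dotProduct_self_eq_sum (b : OrthonormalBasis n ℝ (EuclideanSpace ℝ n))
    (v : n → ℝ) : v ⬝ᵥ v = ∑ i, (⇑(b i) ⬝ᵥ v) ^ 2 := by
  have h := b.sum_inner_mul_inner (WithLp.toLp 2 v) (WithLp.toLp 2 v)
  simp only [EuclideanSpace.inner_eq_star_dotProduct, star_trivial, dotProduct_comm v] at h
  simp only [← h, sq]

variable [DecidableEq n]

theorem Matrix.IsHermitian.dotProduct_mulVec_eq_sum {G : Matrix n n ℝ} (hG : G.IsHermitian)
    (v : n → ℝ) :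
    v ⬝ᵥ (G *ᵥ v) = ∑ i, hG.eigenvalues i * (⇑(hG.eigenvectorBasis i) ⬝ᵥ v) ^ 2 := by
  have h := hG.eigenvectorBasis.sum_inner_mul_inner (WithLp.toLp 2 v) (WithLp.toLp 2 (G *ᵥ v))
  have hGb : ∀ i, ⇑(hG.eigenvectorBasis i) ⬝ᵥ (G *ᵥ v) =
      hG.eigenvalues i * (⇑(hG.eigenvectorBasis i) ⬝ᵥ v) := fun i => by
    rw [dotProduct_mulVec, ← mulVec_transpose, ← conjTranspose_eq_transpose_of_trivial, hG.eq,
      hG.mulVec_eigenvectorBasis, smul_dotProduct, smul_eq_mul]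
  simp only [EuclideanSpace.inner_eq_star_dotProduct, star_trivial, dotProduct_comm (G *ᵥ v),
    hGb] at h
  rw [← h]
  exact sum_congr rfl fun i _ => by ring

theorem Matrix.PosSemidef.det_div_pow_mul_dotProduct_le {H : Matrix n n ℝ} (hH : H.PosSemidef)
    {T : ℝ} (hT : 0 < T) (hHT : H.trace ≤ T) (v : n → ℝ) :
    H.det / T ^ (Fintype.card n - 1) * (v ⬝ᵥ v) ≤ v ⬝ᵥ (H *ᵥ v) := by
  rcases isEmpty_or_nonempty n with hn | hn
  · simp [dotProduct]
  set μ := hH.1.eigenvalues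
  obtain ⟨i₀, -, hi₀⟩ := exists_min_image univ μ univ_nonempty
  have hμ0 : ∀ i, 0 ≤ μ i := hH.eigenvalues_nonneg
  have hμT : ∀ i, μ i ≤ T := fun i => by
    refine le_trans ?_ hHT
    rw [hH.1.trace_eq_sum_eigenvalues]
    simpa using single_le_sum (fun j _ => hμ0 j) (mem_univ i)
  have hdet : H.det ≤ μ i₀ * T ^ (Fintype.card n - 1) := by
    rw [hH.1.det_eq_prod_eigenvalues, ← mul_prod_erase univ _ (mem_univ i₀)]
    simp only [RCLike.ofReal_real_eq_id, id]
    refine mul_le_mul_of_nonneg_left ?_ (hμ0 i₀)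
    refine (prod_le_prod (fun i _ => hμ0 i) fun i _ => hμT i).trans_eq ?_
    simp [card_erase_of_mem]
  calc H.det / T ^ (Fintype.card n - 1) * (v ⬝ᵥ v)
      ≤ μ i₀ * (v ⬝ᵥ v) := by
        gcongr
        · simpa using dotProduct_self_star_nonneg v
        · exact div_le_of_le_mul₀ (by positivity) (hμ0 i₀) hdet
    _ = ∑ i, μ i₀ * (⇑(hH.1.eigenvectorBasis i) ⬝ᵥ v) ^ 2 := by
        rw [hH.1.eigenvectorBasis.dotProduct_self_eq_sum, mul_sum]
    _ ≤ ∑ i, μ i * (⇑(hH.1.eigenvectorBasis i) ⬝ᵥ v) ^ 2 :=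
        sum_le_sum fun i _ => by gcongr; exact hi₀ i (mem_univ i)
    _ = v ⬝ᵥ (H *ᵥ v) := (hH.1.dotProduct_mulVec_eq_sum v).symm

theorem Matrix.IsHermitian.finrank_le_card_le_eigenvalues {G : Matrix n n ℝ}
    (hG : G.IsHermitian) {c : ℝ} (W : Submodule ℝ (n → ℝ))
    (hW : ∀ v ∈ W, c * (v ⬝ᵥ v) ≤ v ⬝ᵥ (G *ᵥ v)) :
    Module.finrank ℝ W ≤ #{i | c ≤ hG.eigenvalues i} := by
  by_contra! hlt
  set b := hG.eigenvectorBasis with hb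
  set S : Finset n := {i | c ≤ hG.eigenvalues i}
  -- by counting dimensions, some nonzero `v ∈ W` is orthogonal to every eigenvector in `S`
  let f : W →ₗ[ℝ] (S → ℝ) := (of fun (i : S) j => b i j).mulVecLin ∘ₗ W.subtype
  obtain ⟨⟨v, hvW⟩, hv, hv0⟩ :=
    (Submodule.ne_bot_iff _).1 (LinearMap.ker_ne_bot_of_finrank_lt (f := f) (by simpa using hlt))
  have horth : ∀ i ∈ S, ⇑(b i) ⬝ᵥ v = 0 := fun i hi => congrFun hv ⟨i, hi⟩
  have hv0' : v ≠ 0 := fun h => hv0 (by simp [h])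
  obtain ⟨i₁, hi₁⟩ : ∃ i, ⇑(b i) ⬝ᵥ v ≠ 0 := by
    by_contra! h
    exact hv0' (dotProduct_self_eq_zero.1 (by simp [b.dotProduct_self_eq_sum, h]))
  have hlt' : ∀ i ∉ S, hG.eigenvalues i < c := fun i hi => by simpa [S] using hi
  have hquad : v ⬝ᵥ (G *ᵥ v) < c * (v ⬝ᵥ v) := by
    rw [hG.dotProduct_mulVec_eq_sum, ← hb, b.dotProduct_self_eq_sum, mul_sum]
    refine sum_lt_sum (fun i _ => ?_) ⟨i₁, mem_univ _, ?_⟩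
    · by_cases hi : i ∈ S
      · simp [horth i hi]
      · exact mul_le_mul_of_nonneg_right (hlt' i hi).le (sq_nonneg _)
    · have : i₁ ∉ S := fun h => hi₁ (horth i₁ h)
      exact mul_lt_mul_of_pos_right (hlt' i₁ this) (by positivity)
  linarith [hW v hvW]

end Spectral

theorem Matrix.trace_eq_rank_of_mul_self_eq {K n : Type*} [Field K] [Fintype n] [DecidableEq n]
    {B : Matrix n n K} (hB : B * B = B) : B.trace = B.rank := by
  have hidem : IsIdempotentElem (toLin' B) := by
    rw [IsIdempotentElem, Module.End.mul_eq_comp, ← toLin'_mul, hB]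
  rw [← trace_toLin'_eq, ((LinearMap.isProj_range_iff_isIdempotentElem _).2 hidem).trace, rank,
    toLin'_apply']

section OrthogonalProjection

variable {n : Type*} [Fintype n] {B : Matrix n n ℝ}

theorem Matrix.abs_apply_le_one_of_orthogonalProjection (hB : B * B = B) (hBt : Bᵀ = B)
    (i j : n) : |B i j| ≤ 1 := by
  have hdiag : ∀ j, B j j = ∑ l, B l j ^ 2 := fun j => by
    conv_lhs => rw [← hB, ← congrArg (· * B) hBt]
    simp [mul_apply, sq]
  have hle : ∀ i, B i j ^ 2 ≤ B j j := fun i => by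
    rw [hdiag j]
    exact single_le_sum (f := fun l => B l j ^ 2) (fun l _ => sq_nonneg _) (mem_univ i)
  have hjj : B j j ≤ 1 := by nlinarith [hle j, sq_nonneg (B j j)]
  exact abs_le_one_iff_mul_self_le_one.2 (by nlinarith [hle i])

theorem Matrix.isCompact_setOf_orthogonalProjection_trace_eq (r : ℝ) :
    IsCompact {B : Matrix n n ℝ | B * B = B ∧ Bᵀ = B ∧ B.trace = r} := by
  have hcube : IsCompact (Set.univ.pi fun _ : n => Set.univ.pi fun _ : n => Set.Icc (-1 : ℝ) 1) :=
    isCompact_univ_pi fun _ => isCompact_univ_pi fun _ => isCompact_Icc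
  refine hcube.of_isClosed_subset ?_ fun B ⟨hB, hBt, _⟩ => ?_
  · refine (isClosed_eq (by fun_prop) (by fun_prop)).inter
      ((isClosed_eq (by fun_prop) (by fun_prop)).inter (isClosed_eq (by fun_prop) (by fun_prop)))
  · exact Set.mem_univ_pi.2 fun i => Set.mem_univ_pi.2 fun j =>
      abs_le.1 (abs_apply_le_one_of_orthogonalProjection hB hBt i j)

variable [DecidableEq n]

/-- For an orthogonal projection `B`, this is `(K B)ᵀ (K B)` on `range B` and the identity on
`ker B`. -/
def Matrix.compressedGram (K B : Matrix n n ℝ) : Matrix n n ℝ :=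
  (K * B)ᵀ * (K * B) + 1 - B

theorem Matrix.compressedGram_eq (hB : B * B = B) (hBt : Bᵀ = B) (K : Matrix n n ℝ) :
    compressedGram K B = (K * B)ᴴ * (K * B) + (1 - B)ᴴ * (1 - B) := by
  have : (1 - B)ᴴ * (1 - B) = 1 - B := by
    rw [conjTranspose_eq_transpose_of_trivial, transpose_sub, transpose_one, hBt]
    simp [sub_mul, mul_sub, hB]
  rw [this, compressedGram, conjTranspose_eq_transpose_of_trivial, add_sub_assoc]

theorem Matrix.posSemidef_compressedGram (hB : B * B = B) (hBt : Bᵀ = B) (K : Matrix n n ℝ) :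
    (compressedGram K B).PosSemidef := by
  rw [compressedGram_eq hB hBt]
  exact (posSemidef_conjTranspose_mul_self _).add (posSemidef_conjTranspose_mul_self _)

theorem Matrix.compressedGram_mulVec_of_mulVec_eq {v : n → ℝ} (hv : B *ᵥ v = v)
    (K : Matrix n n ℝ) : compressedGram K B *ᵥ v = ((K * B)ᵀ * (K * B)) *ᵥ v := by
  rw [compressedGram, sub_mulVec, add_mulVec, one_mulVec, hv, add_sub_cancel_right]

theorem Matrix.posDef_compressedGram (hB : B * B = B) (hBt : Bᵀ = B) {K : Matrix n n ℝ}
    (hK : Disjoint (LinearMap.range B.mulVecLin) (LinearMap.ker K.mulVecLin)) :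
    (compressedGram K B).PosDef := by
  have hX := posSemidef_conjTranspose_mul_self (K * B)
  have hY := posSemidef_conjTranspose_mul_self (1 - B)
  refine posDef_iff_dotProduct_mulVec.2 ⟨(posSemidef_compressedGram hB hBt K).1, fun v hv => ?_⟩
  rw [compressedGram_eq hB hBt, add_mulVec, dotProduct_add]
  refine (add_nonneg (hX.dotProduct_mulVec_nonneg v) (hY.dotProduct_mulVec_nonneg v)).lt_of_ne ?_
  intro h0
  obtain ⟨hXv, hYv⟩ := (add_eq_zero_iff_of_nonneg (hX.dotProduct_mulVec_nonneg v)
    (hY.dotProduct_mulVec_nonneg v)).1 h0.symm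
  have hKBv : (K * B) *ᵥ v = 0 := (conjTranspose_mul_self_mulVec_eq_zero _ _).1
    ((hX.dotProduct_mulVec_zero_iff v).1 hXv)
  have hBv : B *ᵥ v = v := by
    have := (conjTranspose_mul_self_mulVec_eq_zero _ _).1 ((hY.dotProduct_mulVec_zero_iff v).1 hYv)
    rwa [sub_mulVec, one_mulVec, sub_eq_zero, eq_comm] at this
  refine hv (Submodule.disjoint_def.1 hK v ⟨v, hBv⟩ ?_)
  rwa [LinearMap.mem_ker, mulVecLin_apply, ← hBv, mulVec_mulVec]

theorem Matrix.trace_transpose_mul_self_mul_le (hB : B * B = B) (hBt : Bᵀ = B)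
    (K : Matrix n n ℝ) : ((K * B)ᵀ * (K * B)).trace ≤ (Kᵀ * K).trace := by
  have key : ∀ P : Matrix n n ℝ, P * P = P → Pᵀ = P →
      ((K * P)ᵀ * (K * P)).trace = (Kᵀ * K * P).trace := fun P hP hPt =>
    calc ((K * P)ᵀ * (K * P)).trace = (P * (Kᵀ * K * P)).trace := by
          rw [transpose_mul, hPt]; simp only [Matrix.mul_assoc]
      _ = (Kᵀ * K * P * P).trace := trace_mul_comm _ _
      _ = (Kᵀ * K * P).trace := by rw [Matrix.mul_assoc _ P P, hP]
  have hC : (1 - B) * (1 - B) = 1 - B := by simp [sub_mul, mul_sub, hB]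
  have hCt : (1 - B)ᵀ = 1 - B := by rw [transpose_sub, transpose_one, hBt]
  have hnonneg : 0 ≤ ((K * (1 - B))ᵀ * (K * (1 - B))).trace := by
    rw [← conjTranspose_eq_transpose_of_trivial]
    exact (posSemidef_conjTranspose_mul_self _).trace_nonneg
  have hsplit : (Kᵀ * K).trace =
      ((K * B)ᵀ * (K * B)).trace + ((K * (1 - B))ᵀ * (K * (1 - B))).trace := by
    rw [key B hB hBt, key _ hC hCt, mul_sub, mul_one, trace_sub]
    ring
  linarith

theorem Matrix.trace_compressedGram_le (hB : B * B = B) (hBt : Bᵀ = B) (K : Matrix n n ℝ) :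
    (compressedGram K B).trace ≤ (Kᵀ * K).trace + Fintype.card n := by
  rw [compressedGram, trace_sub, trace_add, trace_one, trace_eq_rank_of_mul_self_eq hB]
  linarith [trace_transpose_mul_self_mul_le hB hBt K, (B.rank.cast_nonneg : (0 : ℝ) ≤ B.rank)]

theorem Matrix.exists_trace_compressedGram_le {ι : Type*} [Fintype ι]
    (K : ι → Matrix n n ℝ) : ∃ T > 0, ∀ i {B : Matrix n n ℝ}, B * B = B → Bᵀ = B →
      (compressedGram (K i) B).trace ≤ T := by
  have hnonneg : ∀ i, 0 ≤ ((K i)ᵀ * K i).trace := fun i => by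
    rw [← conjTranspose_eq_transpose_of_trivial]
    exact (posSemidef_conjTranspose_mul_self _).trace_nonneg
  have hsum : 0 ≤ ∑ i, ((K i)ᵀ * K i).trace := sum_nonneg fun i _ => hnonneg i
  refine ⟨∑ i, ((K i)ᵀ * K i).trace + Fintype.card n + 1,
    by linarith [(Fintype.card n).cast_nonneg (α := ℝ)], fun i B hB hBt => ?_⟩
  linarith [trace_compressedGram_le hB hBt (K i), single_le_sum (fun i _ => hnonneg i) (mem_univ i)]

theorem Matrix.continuous_det_compressedGram (K : Matrix n n ℝ) :
    Continuous fun B => (compressedGram K B).det := by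
  unfold compressedGram
  fun_prop

end OrthogonalProjection

theorem IsCompact.exists_pos_forall_exists_le {X ι : Type*} [TopologicalSpace X] [Fintype ι]
    {s : Set X} (hs : IsCompact s) {g : ι → X → ℝ} (hg : ∀ i, Continuous (g i))
    (hpos : ∀ x ∈ s, ∃ i, 0 < g i x) : ∃ ε > 0, ∀ x ∈ s, ∃ i, ε ≤ g i x := by
  rcases s.eq_empty_or_nonempty with rfl | ⟨x₀, hx₀⟩
  · exact ⟨1, one_pos, by simp⟩
  have : Nonempty ι := (hpos x₀ hx₀).nonempty
  let F : X → ℝ := fun x => univ.sup' univ_nonempty (g · x)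
  have hF : Continuous F := Continuous.finset_sup'_apply _ fun i _ => hg i
  obtain ⟨x₁, hx₁, hmin⟩ := hs.exists_isMinOn ⟨x₀, hx₀⟩ hF.continuousOn
  obtain ⟨i₁, hi₁⟩ := hpos x₁ hx₁
  refine ⟨F x₁, hi₁.trans_le (le_sup' (g · x₁) (mem_univ i₁)), fun x hx => ?_⟩
  obtain ⟨i, -, hi⟩ := exists_mem_eq_sup' univ_nonempty (g · x)
  exact ⟨i, (hmin hx).trans_eq hi⟩

theorem Submodule.eq_top_of_monotone_of_succ_eq {K V : Type*} [DivisionRing K] [AddCommGroup V]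
    [Module K V] [FiniteDimensional K V] {S : ℕ → Submodule K V} (hS : Monotone S)
    (h0 : S 0 ≠ ⊥) (hstab : ∀ n, S (n + 1) = S n → S n = ⊤) :
    S (Module.finrank K V - 1) = ⊤ := by
  have hgrow : ∀ n, min (n + 1) (Module.finrank K V) ≤ Module.finrank K (S n) := by
    intro n
    induction n with
    | zero => have := Submodule.one_le_finrank_iff.2 h0; omega
    | succ n ih =>
      by_cases heq : S (n + 1) = S n
      · rw [heq, hstab n heq, finrank_top]; omega
      · have := Submodule.finrank_lt_finrank_of_lt ((hS (by omega : n ≤ n + 1)).lt_of_ne' heq)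
        omega
  refine Submodule.eq_top_of_finrank_eq (le_antisymm (Submodule.finrank_le _) ?_)
  have := hgrow (Module.finrank K V - 1)
  omega

theorem exteriorPower.ιMulti_ne_zero_iff {K E : Type*} [Field K] [AddCommGroup E] [Module K E]
    {n : ℕ} {v : Fin n → E} : exteriorPower.ιMulti K n v ≠ 0 ↔ LinearIndependent K v := by
  refine ⟨fun h => by_contra fun hv => h ((ιMulti K n).map_linearDependent v hv), fun hv => ?_⟩
  simpa [ιMulti_family] using (ιMulti_family_linearIndependent_field (n := n) hv).ne_zero
    (Set.powersetCard.ofFinEmbEquiv (OrderIso.refl (Fin n)).toOrderEmbedding)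

theorem Matrix.exists_linearIndependent_mulVec_of_le_rank {K m n : Type*} [Field K] [Fintype n]
    {Q : Matrix m n K} {k : ℕ} (hQ : k ≤ Q.rank) :
    ∃ x : Fin k → n → K, LinearIndependent K fun j => Q *ᵥ x j := by
  obtain ⟨y, hy⟩ := exists_linearIndependent_of_le_finrank (R := K) hQ
  choose x hx using fun j => LinearMap.mem_range.1 (y j).2
  refine ⟨x, ?_⟩
  have : (fun j => Q *ᵥ x j) = (LinearMap.range Q.mulVecLin).subtype ∘ y := funext hx
  rw [this]
  exact hy.map' _ (Submodule.ker_subtype _)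

namespace PaperProj

theorem sqrt_le_sval_of_le_card {ι : Type*} [Fintype ι] [DecidableEq ι] (M : Matrix ι ι ℝ)
    (hM : (Mᵀ * M).IsHermitian) {k : ℕ} (hk : 1 ≤ k) {c : ℝ}
    (hc : k ≤ #{i | c ≤ hM.eigenvalues i}) : Real.sqrt c ≤ sval M k := by
  set s := univ.val.map fun i => Real.sqrt (hM.eigenvalues i)
  have hcount : #{i | c ≤ hM.eigenvalues i} ≤
      ((s.sort (· ≤ ·)).reverse).countP (fun x => decide (Real.sqrt c ≤ x)) := by
    rw [List.countP_reverse, ← Multiset.coe_countP, Multiset.sort_eq, Multiset.countP_map,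
      card_def]
    exact Multiset.card_le_card (Multiset.monotone_filter_right _
      fun i (h : c ≤ _) => Real.sqrt_le_sqrt h)
  exact List.le_getD_of_lt_countP (List.pairwise_reverse.2 (s.pairwise_sort (· ≤ ·)))
    (by omega) 0

theorem sqrt_le_sval_of_le_det_compressedGram {n : Type*} [Fintype n] [DecidableEq n]
    {B : Matrix n n ℝ} (hB : B * B = B) (hBt : Bᵀ = B) {k : ℕ} (hk : 1 ≤ k)
    (hBk : B.rank = k) (K : Matrix n n ℝ) {ε T : ℝ} (hT : 0 < T)
    (hε : ε ≤ (compressedGram K B).det) (hKT : (compressedGram K B).trace ≤ T) :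
    Real.sqrt (ε / T ^ (Fintype.card n - 1)) ≤ sval (K * B) k := by
  have hG : ((K * B)ᵀ * (K * B)).IsHermitian := by
    rw [IsHermitian, conjTranspose_eq_transpose_of_trivial]
    exact isSymm_transpose_mul_self _
  refine sqrt_le_sval_of_le_card _ hG hk (hBk ▸ hG.finrank_le_card_le_eigenvalues _ ?_)
  rintro v ⟨y, rfl⟩
  have hv : B *ᵥ (B *ᵥ y) = B *ᵥ y := by rw [mulVec_mulVec, hB]
  calc ε / T ^ (Fintype.card n - 1) * (B *ᵥ y ⬝ᵥ B *ᵥ y)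
      ≤ (compressedGram K B).det / T ^ (Fintype.card n - 1) * (B *ᵥ y ⬝ᵥ B *ᵥ y) := by
        gcongr
        simpa using dotProduct_self_star_nonneg (B *ᵥ y)
    _ ≤ B *ᵥ y ⬝ᵥ (compressedGram K B *ᵥ B *ᵥ y) :=
        (posSemidef_compressedGram hB hBt K).det_div_pow_mul_dotProduct_le hT hKT _
    _ = B *ᵥ y ⬝ᵥ (((K * B)ᵀ * (K * B)) *ᵥ B *ᵥ y) := by
        rw [compressedGram_mulVec_of_mulVec_eq hv]

theorem IrreducibleTuple.span_orbit_eq_top {V : Type*} [AddCommGroup V] [Module ℝ V]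
    [FiniteDimensional ℝ V] {N : ℕ} {f : Fin N → V →ₗ[ℝ] V} (hf : IrreducibleTuple f)
    {ω : V} (hω : ω ≠ 0) :
    Submodule.span ℝ {x | ∃ m < Module.finrank ℝ V, ∃ w : Fin m → Fin N,
      x = (List.ofFn fun j => f (w j)).prod ω} = ⊤ := by
  let S : ℕ → Submodule ℝ V := fun n => Submodule.span ℝ
    {x | ∃ m ≤ n, ∃ w : Fin m → Fin N, x = (List.ofFn fun j => f (w j)).prod ω}
  have hS : Monotone S := fun a b hab =>
    Submodule.span_mono fun x ⟨m, hm, w, hx⟩ => ⟨m, hm.trans hab, w, hx⟩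
  have hω0 : ω ∈ S 0 := Submodule.subset_span ⟨0, le_rfl, Fin.elim0, by simp⟩
  have hne : ∀ n, S n ≠ ⊥ := fun n h =>
    hω ((Submodule.mem_bot ℝ).1 (h ▸ hS n.zero_le hω0))
  have hstep : ∀ n i, (S n).map (f i) ≤ S (n + 1) := by
    intro n i
    rw [Submodule.map_span, Submodule.span_le]
    rintro _ ⟨_, ⟨m, hm, w, rfl⟩, rfl⟩
    exact Submodule.subset_span ⟨m + 1, by omega, Fin.cons i w, by simp [List.ofFn_succ]⟩
  have htop : S (Module.finrank ℝ V - 1) = ⊤ :=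
    Submodule.eq_top_of_monotone_of_succ_eq hS (hne 0) fun n heq =>
      (hf (S n) fun i => heq ▸ hstep n i).resolve_left (hne n)
  have hpos : 0 < Module.finrank ℝ V := Module.finrank_pos_iff_exists_ne_zero.2 ⟨ω, hω⟩
  rw [← htop]
  congr 1
  ext x
  constructor <;> rintro ⟨m, hm, w, rfl⟩ <;> exact ⟨m, by omega, w, rfl⟩

theorem IrreducibleTuple.exists_apply_orbit_ne_zero {V M : Type*} [AddCommGroup V]
    [Module ℝ V] [FiniteDimensional ℝ V] [AddCommGroup M] [Module ℝ M] {N : ℕ}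
    {f : Fin N → V →ₗ[ℝ] V} (hf : IrreducibleTuple f) {ω : V} (hω : ω ≠ 0) {g : V →ₗ[ℝ] M}
    (hg : g ≠ 0) :
    ∃ m < Module.finrank ℝ V, ∃ w : Fin m → Fin N, g ((List.ofFn fun j => f (w j)).prod ω) ≠ 0 := by
  by_contra! h
  refine hg (LinearMap.ext_on (hf.span_orbit_eq_top hω) ?_)
  rintro _ ⟨m, hm, w, rfl⟩
  exact h m hm w

theorem extPowMap_eq_map {V : Type*} [AddCommGroup V] [Module ℝ V] (k : ℕ)
    (f : V →ₗ[ℝ] V) : extPowMap k f = exteriorPower.map k f := by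
  ext v
  simp [extPowMap, Function.comp_def]

theorem map_toLin'_wordProd {d N : ℕ} (k : ℕ) (A : Fin N → Matrix (Fin d) (Fin d) ℝ)
    {m : ℕ} (w : Fin m → Fin N) :
    exteriorPower.map k (toLin' (wordProd A w)) =
      (List.ofFn fun j => exteriorPower.map k (toLin' (A (w j)))).prod := by
  let φ : Matrix (Fin d) (Fin d) ℝ →* Module.End ℝ (⋀[ℝ]^k (Fin d → ℝ)) :=
    { toFun := fun M => exteriorPower.map k (toLin' M)
      map_one' := by simp [Module.End.one_eq_id]
      map_mul' := fun M M' => by simp [toLin'_mul, Module.End.mul_eq_comp] }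
  have := map_list_prod φ (List.ofFn fun j => A (w j))
  rw [List.map_ofFn] at this
  exact this

theorem exists_short_word_disjoint_ker {d N k : ℕ} {A : Fin N → Matrix (Fin d) (Fin d) ℝ}
    (hA : kIrreducible k A) {Q : Matrix (Fin d) (Fin d) ℝ} (hQ : k ≤ Q.rank)
    {W : Submodule ℝ (Fin d → ℝ)} (hW : Module.finrank ℝ W = k) :
    ∃ m < d.choose k, ∃ w : Fin m → Fin N,
      Disjoint W (LinearMap.ker (Q * wordProd A w).mulVecLin) := by
  let u : Fin k → Fin d → ℝ := W.subtype ∘ Module.finBasisOfFinrankEq ℝ W hW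
  have hu : LinearIndependent ℝ u :=
    (Module.finBasisOfFinrankEq ℝ W hW).linearIndependent.map' _ W.ker_subtype
  have hspan : Submodule.span ℝ (Set.range u) = W := by
    rw [Set.range_comp, Submodule.span_image, Module.Basis.span_eq, Submodule.map_subtype_top]
  obtain ⟨x, hx⟩ := exists_linearIndependent_mulVec_of_le_rank hQ
  have hQ0 : exteriorPower.map k (toLin' Q) ≠ 0 := fun h => by
    apply exteriorPower.ιMulti_ne_zero_iff.2 hx
    rw [show (fun j => Q *ᵥ x j) = toLin' Q ∘ x from rfl, ← exteriorPower.map_apply_ιMulti,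
      h, LinearMap.zero_apply]
  have hirr : IrreducibleTuple fun i => exteriorPower.map k (toLin' (A i)) := by
    simpa only [kIrreducible, extPowMap_eq_map] using hA
  obtain ⟨m, hm, w, hw⟩ :=
    hirr.exists_apply_orbit_ne_zero (exteriorPower.ιMulti_ne_zero_iff.2 hu) hQ0
  refine ⟨m, by simpa [exteriorPower.finrank_eq] using hm, w, ?_⟩
  rw [← map_toLin'_wordProd, ← LinearMap.comp_apply, ← exteriorPower.map_comp, ← toLin'_mul,
    exteriorPower.map_apply_ιMulti, exteriorPower.ιMulti_ne_zero_iff] at hw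
  rw [← hspan]
  exact Submodule.range_ker_disjoint hw

theorem statement4_general {d N : ℕ} (A : Fin N → Matrix (Fin d) (Fin d) ℝ)
    (Q : Matrix (Fin d) (Fin d) ℝ) (k : ℕ)
    (hk0 : 1 ≤ k) (hk2 : k ≤ Q.rank) (hkirr : kIrreducible k A) :
    ∃ κ : ℝ, 0 < κ ∧ ∀ B : Matrix (Fin d) (Fin d) ℝ,
      B * B = B → Bᵀ = B → B.rank = k →
      ∃ (m : ℕ) (kk : Fin m → Fin N), m ≤ Nat.choose d k ∧
        κ ≤ sval (Q * wordProd A kk * B) k := by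
  let K : (Σ m : Fin (d.choose k), Fin m → Fin N) → Matrix (Fin d) (Fin d) ℝ :=
    fun w => Q * wordProd A w.2
  -- the rank condition is not closed, so the compact set of projections is cut out by the trace
  have htrace : ∀ {B : Matrix (Fin d) (Fin d) ℝ}, B * B = B → (B.trace = k ↔ B.rank = k) :=
    fun hB => by rw [trace_eq_rank_of_mul_self_eq hB, Nat.cast_inj]
  have hpos : ∀ B ∈ {B : Matrix (Fin d) (Fin d) ℝ | B * B = B ∧ Bᵀ = B ∧ B.trace = k},
      ∃ w, 0 < (compressedGram (K w) B).det := fun B ⟨hB, hBt, hBk⟩ => by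
    obtain ⟨m, hm, w, hdisj⟩ := exists_short_word_disjoint_ker hkirr hk2
      (W := LinearMap.range B.mulVecLin) ((htrace hB).1 hBk)
    exact ⟨⟨⟨m, hm⟩, w⟩, (posDef_compressedGram hB hBt hdisj).det_pos⟩
  obtain ⟨ε, hε, hεB⟩ := IsCompact.exists_pos_forall_exists_le
    (isCompact_setOf_orthogonalProjection_trace_eq _) (fun _ => continuous_det_compressedGram _)
    hpos
  obtain ⟨T, hT, hKT⟩ := exists_trace_compressedGram_le K
  refine ⟨Real.sqrt (ε / T ^ (Fintype.card (Fin d) - 1)), by positivity,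
    fun B hB hBt hBk => ?_⟩
  obtain ⟨w, hw⟩ := hεB B ⟨hB, hBt, (htrace hB).2 hBk⟩
  exact ⟨w.1, w.2, w.1.2.le,
    sqrt_le_sval_of_le_det_compressedGram hB hBt hk0 hBk (K w) hT hw (hKT w hB hBt)⟩

/-- positivity of the minimum in the proof of Lemma 4. If `(A_1,…,A_N)`
is `k`-irreducible with `1 ≤ k ≤ rank Q`, then the minimum over rank-`k` orthogonal
projections `B` of `max_{|kk| ≤ d.choose k} σ_k(Q A_kk B)` is strictly positive, i.e. there
exists `κ > 0` bounding all these maxima from below. -/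
theorem statement4 {d N : ℕ} (A : Fin N → Matrix (Fin d) (Fin d) ℝ)
    (hInv : ∀ i, IsUnit (A i)) (Q : Matrix (Fin d) (Fin d) ℝ) (k : ℕ)
    (hk0 : 1 ≤ k) (hk2 : k ≤ Q.rank) (hkirr : kIrreducible k A) :
    ∃ κ : ℝ, 0 < κ ∧ ∀ B : Matrix (Fin d) (Fin d) ℝ,
      B * B = B → Bᵀ = B → B.rank = k →
      ∃ (m : ℕ) (kk : Fin m → Fin N), m ≤ Nat.choose d k ∧
        κ ≤ sval (Q * wordProd A kk * B) k :=
  statement4_general A Q k hk0 hk2 hkirr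

end PaperProj
end
end

section
/- Let A, B ∈ GL_2(ℝ) have strictly positive entries and positive determinants, with Aᵀ ≠ A and Bᵀ ≠ B. Denote by λ_1 > λ_2 > 0 the eigenvalues of A and μ_1 > μ_2 > 0 the eigenvalues of B, and suppose λ_1/λ_2 > μ_1/μ_2 (so that A⊗B has four distinct positive real eigenvalues). Then the pair (A⊗B, Aᵀ⊗Bᵀ) is strongly irreducible: no finite union of nonzero proper linear subspaces of ℝ⁴ is preserved by both A⊗B and Aᵀ⊗Bᵀ. -/
open scoped BigOperators Kronecker

noncomputable section

namespace PaperProj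

open Matrix

/-!
A finite union of subspaces that is mapped onto itself by an invertible map `g` has a member of
maximal dimension which is invariant under some power `g ^ p`. So it suffices to see that no
nonzero proper subspace `Z` is invariant under both `(A ⊗ B) ^ p` and `(Aᵀ ⊗ Bᵀ) ^ q`.
The ratio condition makes the eigenvalues `λᵢ μⱼ` of `A ⊗ B` (and of `Aᵀ ⊗ Bᵀ`) distinct and
positive, hence so are their powers, and a subspace invariant under an operator with simple
spectrum contains every eigenvector on which one of its elements has a nonzero coordinate
(apply a Lagrange interpolation polynomial of the operator). Thus `Z ≠ 0` contains some
eigenvector `v'ₐ ⊗ w'_b` of `Aᵀ ⊗ Bᵀ`; its coordinates in the eigenbasis `vᵢ ⊗ wⱼ` of `A ⊗ B`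
are products of coordinates of `v'ₐ` in `(vᵢ)` and of `w'_b` in `(wⱼ)`, and none of them vanish
because a `2 × 2` matrix sharing an eigenvector with its transpose is symmetric. Hence `Z`
contains the whole eigenbasis of `A ⊗ B`.
-/

open Polynomial Module Function

section Eigenbasis

variable {K V ι : Type*} [Field K] [AddCommGroup V] [Module K V] [Fintype ι] [DecidableEq ι]
  {b : Basis ι K V} {f : End K V} {ν : ι → K}

theorem aeval_lagrangeBasis_apply (hf : ∀ i, f (b i) = ν i • b i) (hν : Injective ν)
    (x : V) (k : ι) : aeval f (Lagrange.basis Finset.univ ν k) x = b.repr x k • b k := by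
  conv_lhs => rw [← b.sum_repr x]
  simp only [map_sum, map_smul, End.aeval_apply_of_mem_apply_eq_smul (hf _), smul_smul]
  rw [Finset.sum_eq_single k (fun i _ hik => ?_) (by simp),
    Lagrange.eval_basis_self hν.injOn (Finset.mem_univ k), mul_one]
  rw [Lagrange.eval_basis_of_ne hik.symm (Finset.mem_univ i), mul_zero, zero_smul]

theorem basis_mem_of_repr_ne_zero (hf : ∀ i, f (b i) = ν i • b i) (hν : Injective ν)
    {Z : Submodule K V} (hZ : Z ∈ f.invtSubmodule) {x : V} (hx : x ∈ Z) {k : ι}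
    (hk : b.repr x k ≠ 0) : b k ∈ Z := by
  have h := aeval_apply_smul_mem_of_le_comap hx (Lagrange.basis Finset.univ ν k) f hZ
  rwa [aeval_lagrangeBasis_apply hf hν, Z.smul_mem_iff hk] at h

theorem exists_basis_mem_of_ne_bot (hf : ∀ i, f (b i) = ν i • b i) (hν : Injective ν)
    {Z : Submodule K V} (hZ : Z ∈ f.invtSubmodule) (hbot : Z ≠ ⊥) : ∃ k, b k ∈ Z := by
  obtain ⟨x, hxZ, hx0⟩ := Submodule.exists_mem_ne_zero_of_ne_bot hbot
  obtain ⟨k, hk⟩ : ∃ k, b.repr x k ≠ 0 := by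
    by_contra! h
    exact hx0 (b.repr.map_eq_zero_iff.mp (Finsupp.ext h))
  exact ⟨k, basis_mem_of_repr_ne_zero hf hν hZ hxZ hk⟩

theorem eq_bot_or_eq_top_of_repr_ne_zero {ι' : Type*} [Fintype ι'] [DecidableEq ι']
    {b' : Basis ι' K V} {f' : End K V} {ν' : ι' → K}
    (hf : ∀ i, f (b i) = ν i • b i) (hν : Injective ν)
    (hf' : ∀ i, f' (b' i) = ν' i • b' i) (hν' : Injective ν')
    (hrepr : ∀ i j, b.repr (b' i) j ≠ 0) {Z : Submodule K V}
    (hZ : Z ∈ f.invtSubmodule) (hZ' : Z ∈ f'.invtSubmodule) : Z = ⊥ ∨ Z = ⊤ := by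
  refine or_iff_not_imp_left.mpr fun hbot => ?_
  obtain ⟨i, hi⟩ := exists_basis_mem_of_ne_bot hf' hν' hZ' hbot
  rw [eq_top_iff, ← b.span_eq, Submodule.span_le]
  rintro _ ⟨j, rfl⟩
  exact basis_mem_of_repr_ne_zero hf hν hZ hi (hrepr i j)

end Eigenbasis

theorem pow_apply_eq_pow_smul {R M : Type*} [CommRing R] [AddCommGroup M] [Module R M]
    {f : End R M} {x : M} {c : R} (h : f x = c • x) (n : ℕ) : (f ^ n) x = c ^ n • x := by
  simpa using End.aeval_apply_of_mem_apply_eq_smul (p := X ^ n) h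

theorem exists_apply_eq_smul_of_repr_eq_zero {K V : Type*} [Field K] [AddCommGroup V]
    [Module K V] {b : Basis (Fin 2) K V} {f : End K V} {ν : Fin 2 → K}
    (hf : ∀ i, f (b i) = ν i • b i) {u : V} {i : Fin 2} (hu : b.repr u i = 0) :
    ∃ c : K, f u = c • u := by
  rw [← b.sum_repr u, Fin.sum_univ_two]
  fin_cases i
  · exact ⟨ν 1, by simp_all [smul_comm (ν 1)]⟩
  · exact ⟨ν 0, by simp_all [smul_comm (ν 0)]⟩

theorem exists_basis_mulVec_eq_smul {K n : Type*} [Field K] [Fintype n] [DecidableEq n]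
    {A : Matrix n n K} {ν : n → K} (hν : Injective ν) (hroot : ∀ i, A.charpoly.IsRoot (ν i)) :
    ∃ b : Basis n K (n → K), ∀ i, A *ᵥ b i = ν i • b i := by
  have hev : ∀ i, End.HasEigenvalue (toLin' A) (ν i) := fun i => by
    rw [End.hasEigenvalue_iff_isRoot_charpoly, charpoly_toLin']
    exact hroot i
  choose v hv using fun i => (hev i).exists_hasEigenvector
  refine ⟨basisOfLinearIndependentOfCardEqFinrank' v
    (End.eigenvectors_linearIndependent' _ ν hν v hv) (by simp), fun i => ?_⟩
  rw [coe_basisOfLinearIndependentOfCardEqFinrank']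
  exact (hv i).apply_eq_smul

section KroneckerVector

variable {R l m n p : Type*}

def kronVec [Mul R] (v : m → R) (w : n → R) : m × n → R := fun k => v k.1 * w k.2

theorem kronecker_mulVec_kronVec [CommSemiring R] [Fintype m] [Fintype n]
    (A : Matrix l m R) (B : Matrix p n R) (v : m → R) (w : n → R) :
    (A ⊗ₖ B) *ᵥ kronVec v w = kronVec (A *ᵥ v) (B *ᵥ w) := by
  ext ⟨i, j⟩
  simp only [kronVec, mulVec, dotProduct, kroneckerMap_apply, Fintype.sum_prod_type,
    Finset.sum_mul_sum]
  exact Finset.sum_congr rfl fun _ _ => Finset.sum_congr rfl fun _ _ => by ring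

theorem kronVec_smul_smul [CommSemiring R] (a c : R) (v : m → R) (w : n → R) :
    kronVec (a • v) (c • w) = (a * c) • kronVec v w := by
  ext k
  simp only [kronVec, Pi.smul_apply, smul_eq_mul]
  ring

variable {K ι κ : Type*} [Field K] [Fintype ι] [Fintype κ]

theorem linearIndependent_kronVec {b : ι → m → K} {c : κ → n → K}
    (hb : LinearIndependent K b) (hc : LinearIndependent K c) :
    LinearIndependent K fun k : ι × κ => kronVec (b k.1) (c k.2) := by
  rw [Fintype.linearIndependent_iff] at hb hc ⊢
  intro g hg ⟨i, j⟩
  have hrow : ∀ x, ∑ j, (∑ i, g (i, j) * b i x) • c j = 0 := fun x => by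
    ext y
    have := congrFun hg (x, y)
    simp only [Finset.sum_apply, Pi.smul_apply, smul_eq_mul, kronVec, Fintype.sum_prod_type,
      Pi.zero_apply, Finset.sum_mul] at this ⊢
    rw [Finset.sum_comm, ← this]
    exact Finset.sum_congr rfl fun _ _ => Finset.sum_congr rfl fun _ _ => by ring
  refine hb (fun i => g (i, j)) (funext fun x => ?_) i
  simpa using hc _ (hrow x) j

variable [Fintype m] [Fintype n]

def kronBasis (b : Basis ι K (m → K)) (c : Basis κ K (n → K)) :
    Basis (ι × κ) K (m × n → K) :=
  basisOfLinearIndependentOfCardEqFinrank' _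
    (linearIndependent_kronVec b.linearIndependent c.linearIndependent) (by
      rw [Fintype.card_prod, ← finrank_eq_card_basis b, ← finrank_eq_card_basis c]
      simp)

variable (b : Basis ι K (m → K)) (c : Basis κ K (n → K))

theorem kronBasis_apply (k : ι × κ) : kronBasis b c k = kronVec (b k.1) (c k.2) :=
  congrFun (coe_basisOfLinearIndependentOfCardEqFinrank' _ _ _) k

theorem kronBasis_repr_kronVec (x : m → K) (y : n → K) (k : ι × κ) :
    (kronBasis b c).repr (kronVec x y) k = b.repr x k.1 * c.repr y k.2 := by
  have hsum : kronVec x y = ∑ k : ι × κ, (b.repr x k.1 * c.repr y k.2) • kronBasis b c k := by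
    conv_lhs => rw [← b.sum_repr x, ← c.sum_repr y]
    ext ⟨s, t⟩
    simp only [kronVec, kronBasis_apply, Finset.sum_apply, Pi.smul_apply, smul_eq_mul,
      Fintype.sum_prod_type, Finset.sum_mul_sum]
    exact Finset.sum_congr rfl fun _ _ => Finset.sum_congr rfl fun _ _ => by ring
  rw [hsum, Basis.repr_sum_self]

theorem kronecker_mulVec_kronBasis {A : Matrix m m K} {B : Matrix n n K} {ν : ι → K}
    {ν' : κ → K} (hb : ∀ i, A *ᵥ b i = ν i • b i) (hc : ∀ j, B *ᵥ c j = ν' j • c j)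
    (k : ι × κ) : (A ⊗ₖ B) *ᵥ kronBasis b c k = (ν k.1 * ν' k.2) • kronBasis b c k := by
  rw [kronBasis_apply, kronecker_mulVec_kronVec, hb, hc, kronVec_smul_smul]

theorem injective_toLin'_kronecker [DecidableEq m] [DecidableEq n] {A : Matrix m m K}
    {B : Matrix n n K} (hA : A.det ≠ 0) (hB : B.det ≠ 0) : Injective (toLin' (A ⊗ₖ B)) := by
  refine mulVec_injective_iff_isUnit.mpr ((isUnit_iff_isUnit_det _).mpr ?_)
  rw [det_kronecker]
  exact (mul_ne_zero (pow_ne_zero _ hA) (pow_ne_zero _ hB)).isUnit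

end KroneckerVector

section FiniteUnion

variable {K V ι : Type*} [Field K] [AddCommGroup V] [Module K V] [Finite ι]
  {W : ι → Submodule K V}

theorem exists_le_of_coe_subset_iUnion [Infinite K] {P : Submodule K V}
    (h : (P : Set V) ⊆ ⋃ j, (W j : Set V)) : ∃ j, P ≤ W j := by
  have hcover : ⋃ j, ((W j).comap P.subtype : Set P) = Set.univ :=
    Set.eq_univ_of_forall fun x => by simpa using h x.2
  obtain ⟨j, hj⟩ := Subspace.exists_eq_top_of_iUnion_eq_univ hcover
  exact ⟨j, fun x hx => (Submodule.comap_subtype_eq_top.mp hj) hx⟩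

theorem exists_map_le_of_image_iUnion_subset [Infinite K] {g : V →ₗ[K] V}
    (hg : g '' ⋃ j, (W j : Set V) ⊆ ⋃ j, (W j : Set V)) (j : ι) : ∃ k, (W j).map g ≤ W k :=
  exists_le_of_coe_subset_iUnion <| by
    rw [Submodule.map_coe]
    exact (Set.image_mono (Set.subset_iUnion _ j)).trans hg

theorem exists_pow_map_eq_of_map_le [FiniteDimensional K V] {g : V →ₗ[K] V} (hg : Injective g)
    (h : ∀ j, ∃ k, (W j).map g ≤ W k) {j₀ : ι}
    (hmax : ∀ k, finrank K (W k) ≤ finrank K (W j₀)) :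
    ∃ p, 0 < p ∧ (W j₀).map (g ^ p) = W j₀ := by
  have hinj : ∀ n : ℕ, Injective ⇑(g ^ n) := fun n => by
    rw [End.coe_pow]
    exact hg.iterate n
  have horbit : ∀ n : ℕ, ∃ k, (W j₀).map (g ^ n) = W k := by
    intro n
    induction n with
    | zero => exact ⟨j₀, by rw [pow_zero, End.one_eq_id, Submodule.map_id]⟩
    | succ n ih =>
      obtain ⟨k, hk⟩ := ih
      obtain ⟨k', hk'⟩ := h k
      have hmap : (W j₀).map (g ^ (n + 1)) = (W k).map g := by
        rw [pow_succ', End.mul_eq_comp, Submodule.map_comp, hk]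
      refine ⟨k', Submodule.eq_of_le_of_finrank_le (hmap ▸ hk') ?_⟩
      rw [← (Submodule.equivMapOfInjective _ (hinj _) _).finrank_eq]
      exact hmax k'
  choose κ hκ using horbit
  obtain ⟨a, b, hab, he⟩ := Finite.exists_ne_map_eq_of_infinite κ
  wlog hlt : a < b generalizing a b
  · exact this b a hab.symm he.symm (hab.lt_or_gt.resolve_left hlt)
  refine ⟨b - a, Nat.sub_pos_of_lt hlt, Submodule.map_injective_of_injective (hinj a) ?_⟩
  rw [← Submodule.map_comp, ← End.mul_eq_comp, ← pow_add, Nat.add_sub_cancel' hlt.le, hκ, hκ, he]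

end FiniteUnion

section TwoByTwo

variable {K : Type*} [Field K]

theorem exists_basis_mulVec_eq_smul_of_charpoly_eq {A : Matrix (Fin 2) (Fin 2) K} {l1 l2 : K}
    (hl : A.charpoly = (X - C l1) * (X - C l2)) (hne : l1 ≠ l2) :
    ∃ b : Basis (Fin 2) K (Fin 2 → K), ∀ i, A *ᵥ b i = ![l1, l2] i • b i := by
  refine exists_basis_mulVec_eq_smul (fun i j hij => ?_) fun i => ?_
  · fin_cases i <;> fin_cases j <;> simp_all [eq_comm]
  · fin_cases i <;> simp [hl]

variable [LinearOrder K] [IsStrictOrderedRing K]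

theorem transpose_eq_self_of_mulVec_eq_smul {A : Matrix (Fin 2) (Fin 2) K} {u : Fin 2 → K}
    (hu : u ≠ 0) {a a' : K} (h : A *ᵥ u = a • u) (h' : Aᵀ *ᵥ u = a' • u) : Aᵀ = A := by
  have e := congrFun h
  have e' := congrFun h'
  simp only [mulVec, dotProduct, Fin.sum_univ_two, Pi.smul_apply, smul_eq_mul,
    transpose_apply] at e e'
  have hu' : u ⬝ᵥ u ≠ 0 := dotProduct_self_eq_zero.not.mpr hu
  simp only [dotProduct, Fin.sum_univ_two] at hu'
  have key : (A 0 1 - A 1 0) * (u 0 * u 0 + u 1 * u 1) = 0 := by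
    linear_combination u 1 * e 0 - u 1 * e' 0 - u 0 * e 1 + u 0 * e' 1
  have hA : A 0 1 = A 1 0 := sub_eq_zero.mp ((mul_eq_zero.mp key).resolve_right hu')
  ext i j
  fin_cases i <;> fin_cases j <;> simp [hA]

theorem repr_ne_zero_of_transpose_ne {A : Matrix (Fin 2) (Fin 2) K} (hA : Aᵀ ≠ A)
    {b b' : Basis (Fin 2) K (Fin 2 → K)} {ν ν' : Fin 2 → K} (hb : ∀ i, A *ᵥ b i = ν i • b i)
    (hb' : ∀ i, Aᵀ *ᵥ b' i = ν' i • b' i) (i j : Fin 2) : b.repr (b' i) j ≠ 0 := fun h => by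
  obtain ⟨c, hc⟩ := exists_apply_eq_smul_of_repr_eq_zero (f := toLin' A) hb h
  exact hA (transpose_eq_self_of_mulVec_eq_smul (b'.ne_zero i) hc (hb' i))

theorem injective_pow_eigenvalue_products {l1 l2 m1 m2 : K} (hl12 : l2 < l1) (hl2 : 0 < l2)
    (hm12 : m2 < m1) (hm2 : 0 < m2) (hlm : l2 * m1 < l1 * m2) {p : ℕ} (hp : p ≠ 0) :
    Injective fun k : Fin 2 × Fin 2 => (![l1, l2] k.1 * ![m1, m2] k.2) ^ p := by
  have h₁ : 0 < l2 * m2 := mul_pos hl2 hm2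
  have h₂ : l2 * m2 < l2 * m1 := mul_lt_mul_of_pos_left hm12 hl2
  have h₃ : l1 * m2 < l1 * m1 := mul_lt_mul_of_pos_left hm12 (hl2.trans hl12)
  rintro ⟨i, j⟩ ⟨i', j'⟩ h
  replace h := (pow_left_inj₀ (by fin_cases i <;> fin_cases j <;> simp <;> linarith)
    (by fin_cases i' <;> fin_cases j' <;> simp <;> linarith) hp).mp h
  fin_cases i <;> fin_cases j <;> fin_cases i' <;> fin_cases j' <;>
    simp only [Fin.zero_eta, Fin.isValue, Fin.mk_one, cons_val_zero, cons_val_one,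
      cons_val_fin_one] at h ⊢ <;>
    first | rfl | (exfalso; linarith)

theorem eq_bot_or_eq_top_of_mem_invtSubmodule_kronecker {A B : Matrix (Fin 2) (Fin 2) K}
    (hA : Aᵀ ≠ A) (hB : Bᵀ ≠ B) {l1 l2 m1 m2 : K} (hl : A.charpoly = (X - C l1) * (X - C l2))
    (hm : B.charpoly = (X - C m1) * (X - C m2)) (hl12 : l2 < l1) (hl2 : 0 < l2)
    (hm12 : m2 < m1) (hm2 : 0 < m2) (hlm : l2 * m1 < l1 * m2) {p q : ℕ} (hp : p ≠ 0)
    (hq : q ≠ 0) {Z : Submodule K (Fin 2 × Fin 2 → K)}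
    (hZp : Z ∈ End.invtSubmodule (toLin' (A ⊗ₖ B) ^ p))
    (hZq : Z ∈ End.invtSubmodule (toLin' (Aᵀ ⊗ₖ Bᵀ) ^ q)) : Z = ⊥ ∨ Z = ⊤ := by
  obtain ⟨bA, hbA⟩ := exists_basis_mulVec_eq_smul_of_charpoly_eq hl hl12.ne'
  obtain ⟨bA', hbA'⟩ :=
    exists_basis_mulVec_eq_smul_of_charpoly_eq ((charpoly_transpose A).trans hl) hl12.ne'
  obtain ⟨bB, hbB⟩ := exists_basis_mulVec_eq_smul_of_charpoly_eq hm hm12.ne'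
  obtain ⟨bB', hbB'⟩ :=
    exists_basis_mulVec_eq_smul_of_charpoly_eq ((charpoly_transpose B).trans hm) hm12.ne'
  refine eq_bot_or_eq_top_of_repr_ne_zero
    (fun k => pow_apply_eq_pow_smul (kronecker_mulVec_kronBasis bA bB hbA hbB k) p)
    (injective_pow_eigenvalue_products hl12 hl2 hm12 hm2 hlm hp)
    (fun k => pow_apply_eq_pow_smul (kronecker_mulVec_kronBasis bA' bB' hbA' hbB' k) q)
    (injective_pow_eigenvalue_products hl12 hl2 hm12 hm2 hlm hq)
    (fun k k' => ?_) hZp hZq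
  rw [kronBasis_apply, kronBasis_repr_kronVec]
  exact mul_ne_zero (repr_ne_zero_of_transpose_ne hA hbA hbA' _ _)
    (repr_ne_zero_of_transpose_ne hB hbB hbB' _ _)

end TwoByTwo

open Polynomial in
theorem statement11_general (A B : Matrix (Fin 2) (Fin 2) ℝ)
    (hAdet : 0 < A.det) (hBdet : 0 < B.det)
    (hAsym : Aᵀ ≠ A) (hBsym : Bᵀ ≠ B)
    (l1 l2 m1 m2 : ℝ)
    (hl : A.charpoly = (X - C l1) * (X - C l2))
    (hm : B.charpoly = (X - C m1) * (X - C m2))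
    (hl12 : l2 < l1) (hl2 : 0 < l2) (hm12 : m2 < m1) (hm2 : 0 < m2)
    (hratio : m1 / m2 < l1 / l2) :
    StronglyIrreducibleTuple ![Matrix.toLin' (A ⊗ₖ B), Matrix.toLin' (Aᵀ ⊗ₖ Bᵀ)] := by
  intro m W hWbot hWtop hW
  obtain ⟨j, hjmax⟩ := Finite.exists_max fun j => finrank ℝ (W j)
  obtain ⟨p, hp, hWp⟩ := exists_pow_map_eq_of_map_le
    (injective_toLin'_kronecker hAdet.ne' hBdet.ne')
    (exists_map_le_of_image_iUnion_subset (hW 0).le) hjmax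
  obtain ⟨q, hq, hWq⟩ := exists_pow_map_eq_of_map_le
    (injective_toLin'_kronecker (by rw [det_transpose]; exact hAdet.ne')
      (by rw [det_transpose]; exact hBdet.ne'))
    (exists_map_le_of_image_iUnion_subset (hW 1).le) hjmax
  have hlm : l2 * m1 < l1 * m2 := by
    rwa [div_lt_div_iff₀ hm2 hl2, mul_comm m1] at hratio
  rcases eq_bot_or_eq_top_of_mem_invtSubmodule_kronecker hAsym hBsym hl hm hl12 hl2 hm12 hm2
    hlm hp.ne' hq.ne' ((End.mem_invtSubmodule_iff_map_le _).mpr hWp.le)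
    ((End.mem_invtSubmodule_iff_map_le _).mpr hWq.le) with h | h
  exacts [hWbot j h, hWtop j h]

open Polynomial in
/-- If `A, B` are positive nonsymmetric `2×2` matrices with positive
determinants whose eigenvalue ratios satisfy `λ₁/λ₂ > μ₁/μ₂`, then the pair
`(A ⊗ B, Aᵀ ⊗ Bᵀ)` is strongly irreducible. -/
theorem statement11 (A B : Matrix (Fin 2) (Fin 2) ℝ)
    (hApos : ∀ i j, 0 < A i j) (hBpos : ∀ i j, 0 < B i j)
    (hAdet : 0 < A.det) (hBdet : 0 < B.det)
    (hAsym : Aᵀ ≠ A) (hBsym : Bᵀ ≠ B)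
    (l1 l2 m1 m2 : ℝ)
    (hl : A.charpoly = (X - C l1) * (X - C l2))
    (hm : B.charpoly = (X - C m1) * (X - C m2))
    (hl12 : l2 < l1) (hl2 : 0 < l2) (hm12 : m2 < m1) (hm2 : 0 < m2)
    (hratio : m1 / m2 < l1 / l2) :
    StronglyIrreducibleTuple ![Matrix.toLin' (A ⊗ₖ B), Matrix.toLin' (Aᵀ ⊗ₖ Bᵀ)] :=
  statement11_general A B hAdet hBdet hAsym hBsym l1 l2 m1 m2 hl hm hl12 hl2 hm12 hm2 hratio

end PaperProj
end
end
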